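/- arXiv:2308.05448 — 4 statements merged into one kernel-verified Lean document; each statement's English description precedes it below -/
import Mathlib

section
/- Let z ∈ D_{F⋆}. Then for every k = 0,…,n−2 the quasi-derivative with respect to F⋆ satisfies the identity z^[k] = z^(k) + Σ_{j=0}^{k−2} ( Σ_{s=j}^{k−2} (−1)^{s+k} C(s,j) p_{n−k+s}^{(s−j)} ) z^(j) on [0,1], where C(s,j) denotes the binomial coefficient s!/(j!(s−j)!) and empty sums are zero (in particular z^[0] = z and z^[1] = z′). -/
open MeasureTheory

noncomputable section

/-- A function `h` is absolutely continuous on `[0,1]`: it is the integral of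
an integrable function. -/
def ACOn01 (h : ℝ → ℂ) : Prop :=
  ∃ g : ℝ → ℂ, IntegrableOn g (Set.Icc (0:ℝ) 1) ∧
    ∀ x ∈ Set.Icc (0:ℝ) 1, h x = h 0 + ∫ t in (0:ℝ)..x, g t

/-- Membership in the Sobolev space `W_2^s[0,1]`: the derivatives of order
`< s` are absolutely continuous on `[0,1]` and the `s`-th derivative is in
`L²[0,1]`.  For `s = 0` this is just `L²[0,1]`. -/
def MemW2 (s : ℕ) (g : ℝ → ℂ) : Prop :=
  (∀ j : ℕ, j + 1 ≤ s → ACOn01 (deriv^[j] g)) ∧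
  MemLp (deriv^[s] g) 2 (volume.restrict (Set.Icc (0:ℝ) 1))

/-- The entries `f_{k,j}` of the associated matrix `F`:
`f_{n−1,1} = −σ`, `f_{n,2} = σ − p₁`, `f_{n,j} = −p_{j−1}` for `3 ≤ j ≤ n−1`,
all other entries zero. -/
def Fmat (n : ℕ) (σ : ℝ → ℂ) (p : ℕ → ℝ → ℂ) (k j : ℕ) : ℝ → ℂ := fun x =>
  if k = n - 1 ∧ j = 1 then -σ x
  else if k = n ∧ j = 2 then σ x - p 1 x
  else if k = n ∧ 3 ≤ j ∧ j ≤ n - 1 then -(p (j-1) x)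
  else 0

/-- The entries `f⋆_{k,j} = (−1)^{k+j+1} f_{n−j+1, n−k+1}` of the matrix `F⋆`. -/
def Fstar (n : ℕ) (σ : ℝ → ℂ) (p : ℕ → ℝ → ℂ) (k j : ℕ) : ℝ → ℂ := fun x =>
  (-1 : ℂ)^(k + j + 1) * Fmat n σ p (n - j + 1) (n - k + 1) x

/-- `Y : ℕ → ℝ → ℂ` is the tower of quasi-derivatives (w.r.t. the matrix with
entries `f`) of the function `Y 0`:  `Y k` is absolutely continuous on `[0,1]`
for `k ≤ n−1`, and for `1 ≤ k ≤ n` the recursive relation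
`Y (k−1)′ = Y k + Σ_{j=1}^{k} f_{k,j} · Y (j−1)`, i.e.
`Y k = (Y (k−1))′ − Σ_{j=1}^{k} f_{k,j} · Y (j−1)`, holds a.e. on `(0,1)`. -/
def QuasiChain (n : ℕ) (f : ℕ → ℕ → ℝ → ℂ) (Y : ℕ → ℝ → ℂ) : Prop :=
  (∀ k : ℕ, k ≤ n - 1 → ACOn01 (Y k)) ∧
  (∀ k : ℕ, 1 ≤ k → k ≤ n →
    ∀ᵐ x ∂(volume.restrict (Set.Ioo (0:ℝ) 1)),
      HasDerivAt (Y (k-1)) (Y k x + ∑ j ∈ Finset.Icc 1 k, f k j x * Y (j-1) x) x)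

/-
STATEMENT 3: Let z ∈ D_{F⋆}. Then for every k = 0,…,n−2 the quasi-derivative
w.r.t. F⋆ satisfies
z^[k] = z^(k) + Σ_{j=0}^{k−2} ( Σ_{s=j}^{k−2} (−1)^{s+k} C(s,j) p_{n−k+s}^{(s−j)} ) z^(j)
(in particular z^[0] = z and z^[1] = z′); the identity is stated at interior
points of [0,1], where the classical derivatives are two-sided.
-/

section AuxStatement3
open Filter Metric

lemma ae_hasDerivAt_primitive {g : ℝ → ℂ} (hg : Integrable g (volume : Measure ℝ)) :
    ∀ᵐ x ∂(volume : Measure ℝ), HasDerivAt (fun y => ∫ t in (0:ℝ)..y, g t) (g x) x := by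
  filter_upwards [IsUnifLocDoublingMeasure.ae_tendsto_average_norm_sub
    (volume : Measure ℝ) hg.locallyIntegrable 1] with x hx
  have hδ : Tendsto (fun y : ℝ => |y - x| / 2) (nhdsWithin x {x}ᶜ) (nhdsWithin 0 (Set.Ioi 0)) := by
    rw [tendsto_nhdsWithin_iff]
    constructor
    · have h0 := (continuous_sub_right x).tendsto x
      rw [sub_self] at h0
      have := (h0.abs.div_const 2)
      simp only [abs_zero, zero_div] at this
      exact this.mono_left nhdsWithin_le_nhds
    · filter_upwards [self_mem_nhdsWithin] with y hy
      exact div_pos (abs_pos.mpr (sub_ne_zero.mpr hy)) two_pos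
  have hmem : ∀ᶠ y in nhdsWithin x {x}ᶜ, x ∈ closedBall ((x + y)/2) (1 * (|y - x| / 2)) := by
    filter_upwards with y
    simp only [mem_closedBall, one_mul, Real.dist_eq]
    rw [abs_sub_comm y x]
    cases abs_cases (x - y) with
    | inl h => rw [abs_of_nonneg (by linarith [h.1] : (0:ℝ) ≤ x - (x+y)/2)]; linarith [h.1]
    | inr h => rw [abs_of_nonpos (by linarith [h.1] : x - (x+y)/2 ≤ 0)]; linarith [h.1]
  have key := hx (fun y : ℝ => (x + y)/2) (fun y : ℝ => |y - x| / 2) hδ hmem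
  rw [hasDerivAt_iff_isLittleO, Asymptotics.isLittleO_iff]
  intro ε hε
  have hev : ∀ᶠ y in nhdsWithin x {x}ᶜ,
      ⨍ t in closedBall ((x + y)/2) (|y - x| / 2), ‖g t - g x‖ ≤ ε := by
    have := key.eventually (eventually_le_nhds (by linarith : (0:ℝ) < ε))
    filter_upwards [this] with y hy using hy
  have hx' : ‖(∫ t in (0:ℝ)..x, g t) - (∫ t in (0:ℝ)..x, g t) - (x - x) • g x‖ ≤ ε * ‖x - x‖ := by
    simp
  rw [← nhdsNE_sup_pure, eventually_sup]
  refine ⟨?_, by simpa using hx'⟩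
  filter_upwards [hev, self_mem_nhdsWithin] with y havg hy
  set w := (x + y)/2
  set δ := |y - x| / 2 with hδdef
  have hδpos : 0 < δ := div_pos (abs_pos.mpr (sub_ne_zero.mpr hy)) two_pos
  have hint : IntervalIntegrable g volume x y := hg.intervalIntegrable
  have h1 : (∫ t in (0:ℝ)..y, g t) - (∫ t in (0:ℝ)..x, g t) = ∫ t in x..y, g t :=
    intervalIntegral.integral_interval_sub_left hg.intervalIntegrable hg.intervalIntegrable
  have h2 : (y - x) • g x = ∫ t in x..y, g x := by
    rw [intervalIntegral.integral_const]
  rw [h1, h2, ← intervalIntegral.integral_sub hint intervalIntegrable_const]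
  have hsub : Set.uIoc x y ⊆ closedBall w δ := by
    intro t ht
    rw [Set.mem_uIoc] at ht
    simp only [mem_closedBall, Real.dist_eq, w, hδdef]
    cases abs_cases (y - x) with
    | inl h =>
      rcases ht with ⟨h1', h2'⟩ | ⟨h1', h2'⟩
      · rw [abs_le]; constructor <;> linarith
      · rw [abs_le]; constructor <;> linarith
    | inr h =>
      rcases ht with ⟨h1', h2'⟩ | ⟨h1', h2'⟩
      · rw [abs_le]; constructor <;> linarith
      · rw [abs_le]; constructor <;> linarith
  have hIOn : IntegrableOn (fun t => ‖g t - g x‖) (closedBall w δ) volume :=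
    (hg.integrableOn.sub ((integrableOn_const_iff (by finiteness)).mpr (Or.inr measure_closedBall_lt_top))).norm
  calc ‖∫ t in x..y, (g t - g x)‖
      ≤ ∫ t in Set.uIoc x y, ‖g t - g x‖ := intervalIntegral.norm_integral_le_integral_norm_uIoc
    _ ≤ ∫ t in closedBall w δ, ‖g t - g x‖ := by
        apply setIntegral_mono_set hIOn
        · filter_upwards with t using norm_nonneg _
        · exact Filter.Eventually.of_forall hsub
    _ = (2 * δ) * ⨍ t in closedBall w δ, ‖g t - g x‖ := by
        rw [setAverage_eq, Real.volume_real_closedBall (by positivity),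
          smul_eq_mul, ← mul_assoc, mul_inv_cancel₀ (by positivity), one_mul]
    _ ≤ (2 * δ) * ε := mul_le_mul_of_nonneg_left havg (by positivity)
    _ = ε * ‖y - x‖ := by
        simp only [hδdef, Real.norm_eq_abs]
        ring


/-- Reindexing: sum over `Icc (a+1) (b+1)` of `f` equals sum over `Icc a b` of `f (s+1)`. -/
lemma sum_Icc_shift (a b : ℕ) (f : ℕ → ℂ) :
    ∑ s ∈ Finset.Icc (a+1) (b+1), f s = ∑ s ∈ Finset.Icc a b, f (s+1) := by
  rw [← Finset.map_add_right_Icc a b 1, Finset.sum_map]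
  rfl

lemma perJ (n k j : ℕ) (hkn : k + 1 ≤ n) (hk : 2 ≤ k) (hj : j ≤ k - 1) (P : ℕ → ℕ → ℂ) :
    (∑ s ∈ Finset.Icc j (k-1), (-1:ℂ)^(s+(k+1)) * (s.choose j : ℂ) * P (n-(k+1)+s) (s-j))
    = (∑ s ∈ Finset.Icc j (k-2), (-1:ℂ)^(s+k) * (s.choose j : ℂ) * P (n-k+s) (s-j+1))
      + (if j = 0 then (-1:ℂ)^(k+1) * P (n-(k+1)) 0
         else ∑ s ∈ Finset.Icc (j-1) (k-2), (-1:ℂ)^(s+k) * (s.choose (j-1) : ℂ) * P (n-k+s) (s-(j-1))) := by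
  set G : ℕ → ℂ := fun s => (-1:ℂ)^(s+(k+1)) * (s.choose j : ℂ) * P (n-(k+1)+s) (s-j) with hG
  have hsplit : ∑ s ∈ Finset.Icc j (k-1), G s = G j + ∑ s ∈ Finset.Icc (j+1) (k-1), G s := by
    rw [← Finset.add_sum_erase _ G (Finset.mem_Icc.mpr ⟨le_refl j, hj⟩), Finset.Icc_erase_left,
      ← Finset.Icc_add_one_left_eq_Ioc]
  have hpow : ∀ s : ℕ, (-1:ℂ)^(s+1+(k+1)) = (-1:ℂ)^(s+k) := by
    intro s
    have : s+1+(k+1) = (s+k) + 2 := by ring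
    rw [this, pow_add]; simp
  have hk1 : k - 1 = (k - 2) + 1 := by omega
  rcases Nat.eq_zero_or_pos j with hj0 | hjpos
  · subst hj0
    simp only [if_pos rfl]
    have h1 : ∑ s ∈ Finset.Icc (0+1) (k-1), G s = ∑ s ∈ Finset.Icc 0 (k-2), G (s+1) := by
      rw [hk1]; exact sum_Icc_shift 0 (k-2) G
    have h2 : ∀ s ∈ Finset.Icc 0 (k-2), G (s+1) = (-1:ℂ)^(s+k) * (s.choose 0 : ℂ) * P (n-k+s) (s-0+1) := by
      intro s hs
      simp only [hG]
      have e1 : n-(k+1)+(s+1) = n-k+s := by omega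
      have e2 : s+1-0 = s-0+1 := by omega
      have e3 : (s+1).choose 0 = s.choose 0 := by simp
      rw [e1, e2, e3, hpow]
    have hGj : G 0 = (-1:ℂ)^(k+1) * P (n-(k+1)) 0 := by
      simp [hG]
    rw [hsplit, hGj, h1, Finset.sum_congr rfl h2]
    simp [add_comm]
  · rw [if_neg (by omega)]
    have h1 : ∑ s ∈ Finset.Icc (j+1) (k-1), G s = ∑ s ∈ Finset.Icc j (k-2), G (s+1) := by
      rw [hk1]; exact sum_Icc_shift j (k-2) G
    -- second sum on RHS : reindex
    have h2 : ∑ s ∈ Finset.Icc (j-1) (k-2), (-1:ℂ)^(s+k) * (s.choose (j-1) : ℂ) * P (n-k+s) (s-(j-1))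
        = ∑ s ∈ Finset.Icc j (k-1), (-1:ℂ)^(s+(k+1)) * ((s-1).choose (j-1) : ℂ) * P (n-(k+1)+s) (s-j) := by
      have : Finset.Icc j (k-1) = Finset.Icc ((j-1)+1) ((k-2)+1) := by
        congr 1 <;> omega
      rw [this, sum_Icc_shift]
      apply Finset.sum_congr rfl
      intro s hs
      simp only [Finset.mem_Icc] at hs
      have e1 : n-(k+1)+(s+1) = n-k+s := by omega
      have e2 : s+1-j = s-(j-1) := by omega
      have e3 : s+1-1 = s := by omega
      rw [e1, e2, e3, hpow]
    have h3 : ∑ s ∈ Finset.Icc j (k-2), (-1:ℂ)^(s+k) * (s.choose j : ℂ) * P (n-k+s) (s-j+1)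
        = ∑ s ∈ Finset.Icc (j+1) (k-1), (-1:ℂ)^(s+(k+1)) * ((s-1).choose j : ℂ) * P (n-(k+1)+s) (s-j) := by
      rw [hk1, sum_Icc_shift]
      apply Finset.sum_congr rfl
      intro s hs
      simp only [Finset.mem_Icc] at hs
      have e1 : n-(k+1)+(s+1) = n-k+s := by omega
      have e2 : s+1-j = s-j+1 := by omega
      have e3 : s+1-1 = s := by omega
      rw [e1, e2, e3, hpow]
    rw [hsplit, h1, h2, h3]
    have hsplit2 : ∑ s ∈ Finset.Icc j (k-1), (-1:ℂ)^(s+(k+1)) * ((s-1).choose (j-1) : ℂ) * P (n-(k+1)+s) (s-j)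
        = (-1:ℂ)^(j+(k+1)) * ((j-1).choose (j-1) : ℂ) * P (n-(k+1)+j) (j-j)
          + ∑ s ∈ Finset.Icc (j+1) (k-1), (-1:ℂ)^(s+(k+1)) * ((s-1).choose (j-1) : ℂ) * P (n-(k+1)+s) (s-j) := by
      rw [← Finset.add_sum_erase _ _ (Finset.mem_Icc.mpr ⟨le_refl j, hj⟩), Finset.Icc_erase_left,
        ← Finset.Icc_add_one_left_eq_Ioc]
    rw [hsplit2, ← h1]
    have hGj : G j = (-1:ℂ)^(j+(k+1)) * ((j-1).choose (j-1) : ℂ) * P (n-(k+1)+j) (j-j) := by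
      simp [hG, Nat.choose_self]
    have hcongr : ∑ s ∈ Finset.Icc (j+1) (k-1), G s
        = ∑ s ∈ Finset.Icc (j+1) (k-1),
            ((-1:ℂ)^(s+(k+1)) * ((s-1).choose j : ℂ) * P (n-(k+1)+s) (s-j)
             + (-1:ℂ)^(s+(k+1)) * ((s-1).choose (j-1) : ℂ) * P (n-(k+1)+s) (s-j)) := by
      refine Finset.sum_congr rfl ?_
      intro s hs
      simp only [Finset.mem_Icc] at hs
      have hpascal : s.choose j = (s-1).choose j + (s-1).choose (j-1) := by
        obtain ⟨s', rfl⟩ : ∃ t, s = t+1 := ⟨s-1, by omega⟩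
        obtain ⟨j', rfl⟩ : ∃ t, j = t+1 := ⟨j-1, by omega⟩
        simp only [Nat.add_sub_cancel]
        rw [Nat.choose_succ_succ', Nat.add_comm]
      simp only [hG, hpascal, Nat.cast_add]
      ring
    rw [hGj, hcongr, Finset.sum_add_distrib]
    ring

lemma keyIdentity (n k : ℕ) (hk : 1 ≤ k) (hkn : k + 1 ≤ n) (P : ℕ → ℕ → ℂ) (W : ℕ → ℂ) :
    (∑ j ∈ Finset.range (k-1),
       ((∑ s ∈ Finset.Icc j (k-2), (-1:ℂ)^(s+k) * (s.choose j : ℂ) * P (n-k+s) (s-j+1)) * W j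
        + (∑ s ∈ Finset.Icc j (k-2), (-1:ℂ)^(s+k) * (s.choose j : ℂ) * P (n-k+s) (s-j)) * W (j+1)))
     + (-1:ℂ)^(k+1) * P (n-(k+1)) 0 * W 0
     = ∑ j ∈ Finset.range k,
        (∑ s ∈ Finset.Icc j (k-1), (-1:ℂ)^(s+(k+1)) * (s.choose j : ℂ) * P (n-(k+1)+s) (s-j)) * W j := by
  rcases eq_or_lt_of_le hk with h1 | h2
  · -- k = 1
    subst h1
    norm_num
  · -- 2 ≤ k
    have hk2 : 2 ≤ k := h2
    obtain ⟨m, rfl⟩ : ∃ m, k = m+1 := ⟨k-1, by omega⟩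
    have hm : 1 ≤ m := by omega
    have hstep : ∀ j ∈ Finset.range (m+1),
        (∑ s ∈ Finset.Icc j (m+1-1), (-1:ℂ)^(s+(m+1+1)) * (s.choose j : ℂ) * P (n-(m+1+1)+s) (s-j)) * W j
        = (∑ s ∈ Finset.Icc j (m+1-2), (-1:ℂ)^(s+(m+1)) * (s.choose j : ℂ) * P (n-(m+1)+s) (s-j+1)) * W j
          + (if j = 0 then (-1:ℂ)^(m+1+1) * P (n-(m+1+1)) 0
             else ∑ s ∈ Finset.Icc (j-1) (m+1-2), (-1:ℂ)^(s+(m+1)) * (s.choose (j-1) : ℂ) * P (n-(m+1)+s) (s-(j-1))) * W j := by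
      intro j hj
      rw [Finset.mem_range] at hj
      rw [perJ n (m+1) j hkn hk2 (by omega) P, add_mul]
    have hR : (∑ j ∈ Finset.range (m+1),
        (∑ s ∈ Finset.Icc j (m+1-1), (-1:ℂ)^(s+(m+1+1)) * (s.choose j : ℂ) * P (n-(m+1+1)+s) (s-j)) * W j)
        = (∑ j ∈ Finset.range (m+1),
            (∑ s ∈ Finset.Icc j (m+1-2), (-1:ℂ)^(s+(m+1)) * (s.choose j : ℂ) * P (n-(m+1)+s) (s-j+1)) * W j)
          + ∑ j ∈ Finset.range (m+1),
            (if j = 0 then (-1:ℂ)^(m+1+1) * P (n-(m+1+1)) 0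
             else ∑ s ∈ Finset.Icc (j-1) (m+1-2), (-1:ℂ)^(s+(m+1)) * (s.choose (j-1) : ℂ) * P (n-(m+1)+s) (s-(j-1))) * W j := by
      rw [← Finset.sum_add_distrib]
      exact Finset.sum_congr rfl hstep
    rw [hR]
    have hA : (∑ j ∈ Finset.range (m+1),
        (∑ s ∈ Finset.Icc j (m+1-2), (-1:ℂ)^(s+(m+1)) * (s.choose j : ℂ) * P (n-(m+1)+s) (s-j+1)) * W j)
        = ∑ j ∈ Finset.range (m+1-1),
            (∑ s ∈ Finset.Icc j (m+1-2), (-1:ℂ)^(s+(m+1)) * (s.choose j : ℂ) * P (n-(m+1)+s) (s-j+1)) * W j := by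
      rw [Finset.sum_range_succ, Finset.Icc_eq_empty (show ¬ m ≤ m+1-2 by omega)]
      simp only [Nat.add_sub_cancel, Finset.sum_empty, zero_mul, add_zero]
    have hB : (∑ j ∈ Finset.range (m+1),
        (if j = 0 then (-1:ℂ)^(m+1+1) * P (n-(m+1+1)) 0
         else ∑ s ∈ Finset.Icc (j-1) (m+1-2), (-1:ℂ)^(s+(m+1)) * (s.choose (j-1) : ℂ) * P (n-(m+1)+s) (s-(j-1))) * W j)
        = (∑ j ∈ Finset.range (m+1-1),
            (∑ s ∈ Finset.Icc j (m+1-2), (-1:ℂ)^(s+(m+1)) * (s.choose j : ℂ) * P (n-(m+1)+s) (s-j)) * W (j+1))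
          + (-1:ℂ)^(m+1+1) * P (n-(m+1+1)) 0 * W 0 := by
      rw [Finset.sum_range_succ']
      simp only [Nat.add_sub_cancel]
      simp
    rw [hA, hB, Finset.sum_add_distrib]
    ring

lemma ACOn01.continuousOn {h : ℝ → ℂ} (hh : ACOn01 h) :
    ContinuousOn h (Set.Icc (0:ℝ) 1) := by
  obtain ⟨g, hg, hrep⟩ := hh
  have h1 : Set.uIcc (0:ℝ) 1 = Set.Icc 0 1 := Set.uIcc_of_le zero_le_one
  have hc : ContinuousOn (fun x => h 0 + ∫ t in (0:ℝ)..x, g t) (Set.Icc (0:ℝ) 1) := by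
    apply ContinuousOn.add continuousOn_const
    have := intervalIntegral.continuousOn_primitive_interval (a := 0) (b := 1)
      (μ := volume) (f := g) (by rwa [h1])
    rwa [h1] at this
  exact (hc.congr fun y hy => hrep y hy)

lemma indicator_integral_eq {g : ℝ → ℂ} :
    ∀ y ∈ Set.Icc (0:ℝ) 1,
      (∫ t in (0:ℝ)..y, Set.indicator (Set.Icc (0:ℝ) 1) g t) = ∫ t in (0:ℝ)..y, g t := by
  intro y hy
  apply intervalIntegral.integral_congr
  intro t ht
  apply Set.indicator_of_mem
  rcases Set.mem_uIcc.mp ht with ⟨h1, h2⟩ | ⟨h1, h2⟩ <;>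
    exact ⟨by linarith [hy.1, hy.2], by linarith [hy.1, hy.2]⟩

lemma ae_hasDerivAt_of_ACOn01 {h : ℝ → ℂ} (hh : ACOn01 h) :
    ∀ᵐ x ∂(volume.restrict (Set.Ioo (0:ℝ) 1)), HasDerivAt h (deriv h x) x := by
  obtain ⟨g, hg, hrep⟩ := hh
  set G : ℝ → ℂ := Set.indicator (Set.Icc (0:ℝ) 1) g with hGdef
  have hGint : Integrable G volume := by
    rw [hGdef, integrable_indicator_iff measurableSet_Icc]; exact hg
  have hprim' : ∀ᵐ x ∂(volume.restrict (Set.Ioo (0:ℝ) 1)),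
      HasDerivAt (fun y => ∫ t in (0:ℝ)..y, G t) (G x) x :=
    ae_restrict_of_ae (ae_hasDerivAt_primitive hGint)
  filter_upwards [hprim', ae_restrict_mem measurableSet_Ioo] with x h2 h3
  have hIccnhds : Set.Icc (0:ℝ) 1 ∈ nhds x := Icc_mem_nhds h3.1 h3.2
  have heq : h =ᶠ[nhds x] fun y => h 0 + ∫ t in (0:ℝ)..y, G t := by
    filter_upwards [hIccnhds] with y hy
    rw [hrep y hy, indicator_integral_eq y hy]
  have h2' : HasDerivAt h (G x) x := ((h2.const_add (h 0)).congr_of_eventuallyEq heq)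
  rw [h2'.deriv]
  exact h2'

lemma hasDerivAt_of_ae {h φ : ℝ → ℂ} (hh : ACOn01 h)
    (hφ : ContinuousOn φ (Set.Icc (0:ℝ) 1))
    (hae : ∀ᵐ x ∂(volume.restrict (Set.Ioo (0:ℝ) 1)), HasDerivAt h (φ x) x) :
    ∀ x ∈ Set.Ioo (0:ℝ) 1, HasDerivAt h (φ x) x := by
  obtain ⟨g, hg, hrep⟩ := hh
  set G : ℝ → ℂ := Set.indicator (Set.Icc (0:ℝ) 1) g with hGdef
  have hGint : Integrable G volume := by
    rw [hGdef, integrable_indicator_iff measurableSet_Icc]; exact hg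
  have hprim' : ∀ᵐ x ∂(volume.restrict (Set.Ioo (0:ℝ) 1)),
      HasDerivAt (fun y => ∫ t in (0:ℝ)..y, G t) (G x) x :=
    ae_restrict_of_ae (ae_hasDerivAt_primitive hGint)
  have hφG : ∀ᵐ x ∂(volume.restrict (Set.Ioo (0:ℝ) 1)), φ x = G x := by
    filter_upwards [hae, hprim', ae_restrict_mem measurableSet_Ioo] with x h1 h2 h3
    have hIccnhds : Set.Icc (0:ℝ) 1 ∈ nhds x := Icc_mem_nhds h3.1 h3.2
    have heq : h =ᶠ[nhds x] fun y => h 0 + ∫ t in (0:ℝ)..y, G t := by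
      filter_upwards [hIccnhds] with y hy
      rw [hrep y hy, indicator_integral_eq y hy]
    exact h1.unique ((h2.const_add (h 0)).congr_of_eventuallyEq heq)
  have hae1 : ∀ᵐ t ∂(volume : Measure ℝ), t ∈ Set.Ioo (0:ℝ) 1 → φ t = G t :=
    (ae_restrict_iff' measurableSet_Ioo).mp hφG
  have hne1 : ∀ᵐ t ∂(volume : Measure ℝ), t ≠ 1 := by
    rw [ae_iff]
    simp only [ne_eq, not_not, Set.setOf_eq_eq_singleton]
    exact Real.volume_singleton
  have hint2 : ∀ y ∈ Set.Icc (0:ℝ) 1, (∫ t in (0:ℝ)..y, G t) = ∫ t in (0:ℝ)..y, φ t := by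
    intro y hy
    apply intervalIntegral.integral_congr_ae
    filter_upwards [hae1, hne1] with t h1 h2 ht
    have ht' : t ∈ Set.Ioc (0:ℝ) y := by rwa [Set.uIoc_of_le hy.1] at ht
    exact (h1 ⟨ht'.1, lt_of_le_of_ne (le_trans ht'.2 hy.2) h2⟩).symm
  intro x hx
  have hIccnhds : Set.Icc (0:ℝ) 1 ∈ nhds x := Icc_mem_nhds hx.1 hx.2
  have heq : h =ᶠ[nhds x] fun y => h 0 + ∫ t in (0:ℝ)..y, φ t := by
    filter_upwards [hIccnhds] with y hy
    rw [hrep y hy, ← indicator_integral_eq y hy, hint2 y hy]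
  have hd : HasDerivAt (fun y => ∫ t in (0:ℝ)..y, φ t) (φ x) x := by
    apply intervalIntegral.integral_hasDerivAt_right
    · apply ContinuousOn.intervalIntegrable
      apply hφ.mono
      rw [Set.uIcc_of_le hx.1.le]
      exact Set.Icc_subset_Icc le_rfl hx.2.le
    · exact ContinuousOn.stronglyMeasurableAtFilter isOpen_Ioo
        (hφ.mono Set.Ioo_subset_Icc_self) x hx
    · exact hφ.continuousAt hIccnhds
  exact (hd.const_add (h 0)).congr_of_eventuallyEq heq

lemma hasDerivAt_deriv_of_AC {h : ℝ → ℂ} (hh : ACOn01 h) (hd : ACOn01 (deriv h)) :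
    ∀ x ∈ Set.Ioo (0:ℝ) 1, HasDerivAt h (deriv h x) x :=
  hasDerivAt_of_ae hh hd.continuousOn (ae_hasDerivAt_of_ACOn01 hh)


lemma fstar_sum (n : ℕ) (hn : 3 ≤ n) (σ : ℝ → ℂ) (p : ℕ → ℝ → ℂ) (Z : ℕ → ℝ → ℂ)
    (K : ℕ) (hK1 : 1 ≤ K) (hK2 : K ≤ n-2) (x : ℝ) :
    ∑ j ∈ Finset.Icc 1 K, Fstar n σ p K j x * Z (j-1) x
    = (if 2 ≤ K then (-1:ℂ)^(K+1) * p (n-K) x else 0) * Z 0 x := by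
  have hzero : ∀ b ∈ Finset.Icc 1 K, b ≠ 1 → Fstar n σ p K b x * Z (b-1) x = 0 := by
    intro b hb hb1
    rw [Finset.mem_Icc] at hb
    have hb2 : 2 ≤ b := by omega
    simp only [Fstar, Fmat]
    split_ifs with h1 h2 h3
    · exact absurd h1.2 (by omega)
    · exact absurd h2.2 (by omega)
    · exact absurd h3.1 (by omega)
    · simp
  rw [Finset.sum_eq_single_of_mem 1 (Finset.mem_Icc.mpr ⟨le_rfl, hK1⟩) hzero]
  simp only [Fstar, Fmat]
  have h1 : n - 1 + 1 = n := by omega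
  rw [h1]
  by_cases h2 : 2 ≤ K
  · rw [if_neg (by omega), if_neg (by omega), if_pos ⟨rfl, by omega, by omega⟩,
      if_pos h2]
    have h3 : n - K + 1 - 1 = n - K := by omega
    rw [h3, pow_succ]
    ring
  · rw [if_neg (by omega), if_neg (by omega), if_neg (by omega), if_neg h2]
    simp

end AuxStatement3

theorem statement3
    (n : ℕ) (hn : 3 ≤ n)
    (σ : ℝ → ℂ) (hσ : MemLp σ 2 (volume.restrict (Set.Icc (0:ℝ) 1)))
    (p : ℕ → ℝ → ℂ) (hp : ∀ k : ℕ, 1 ≤ k → k ≤ n - 2 → MemW2 (k-1) (p k))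
    (z : ℝ → ℂ) (Z : ℕ → ℝ → ℂ) (hZ0 : Z 0 = z)
    (hZ : QuasiChain n (Fstar n σ p) Z) :
    ∀ k : ℕ, k ≤ n - 2 → ∀ x ∈ Set.Ioo (0:ℝ) 1,
      Z k x = deriv^[k] z x
        + ∑ j ∈ Finset.range (k-1),
            (∑ s ∈ Finset.Icc j (k-2),
              (-1 : ℂ)^(s+k) * (Nat.choose s j : ℂ) * deriv^[s-j] (p (n-k+s)) x)
            * deriv^[j] z x := by
  obtain ⟨hAC, hrec⟩ := hZ
  have hz0 : ACOn01 z := hZ0 ▸ hAC 0 (by omega)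
  have hzcont : ContinuousOn z (Set.Icc (0:ℝ) 1) := hz0.continuousOn
  -- everywhere derivative of the chain on (0,1)
  have chainD : ∀ K : ℕ, 1 ≤ K → K ≤ n - 2 → ∀ x ∈ Set.Ioo (0:ℝ) 1,
      HasDerivAt (Z (K-1))
        (Z K x + (if 2 ≤ K then (-1:ℂ)^(K+1) * p (n-K) x else 0) * z x) x := by
    intro K hK1 hK2
    have hpcont : 2 ≤ K → ContinuousOn (p (n-K)) (Set.Icc (0:ℝ) 1) := by
      intro h2
      have := ((hp (n-K) (by omega) (by omega)).1 0 (by omega)).continuousOn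
      simpa using this
    have hcont : ContinuousOn
        (fun x => Z K x + (if 2 ≤ K then (-1:ℂ)^(K+1) * p (n-K) x else 0) * z x)
        (Set.Icc (0:ℝ) 1) := by
      by_cases h2 : 2 ≤ K
      · simp only [if_pos h2]
        exact ((hAC K (by omega)).continuousOn).add
          ((continuousOn_const.mul (hpcont h2)).mul hzcont)
      · simp only [if_neg h2, zero_mul, add_zero]
        exact (hAC K (by omega)).continuousOn
    apply hasDerivAt_of_ae (hAC (K-1) (by omega)) hcont
    filter_upwards [hrec K hK1 (by omega)] with x hx
    rw [fstar_sum n hn σ p Z K hK1 hK2 x, hZ0] at hx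
    exact hx
  -- pointwise differentiability of the coefficient functions
  have pD : ∀ m r : ℕ, 1 ≤ m → m ≤ n-2 → r + 2 ≤ m - 1 → ∀ x ∈ Set.Ioo (0:ℝ) 1,
      HasDerivAt (deriv^[r] (p m)) (deriv^[r+1] (p m) x) x := by
    intro m r h1 h2 h3
    have hmw := hp m h1 h2
    have hAC1 : ACOn01 (deriv^[r] (p m)) := hmw.1 r (by omega)
    have hAC2 : ACOn01 (deriv (deriv^[r] (p m))) := by
      have := hmw.1 (r+1) (by omega)
      rwa [Function.iterate_succ_apply'] at this
    intro x hx
    have hstepD := hasDerivAt_deriv_of_AC hAC1 hAC2 x hx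
    rw [show deriv^[r+1] (p m) = deriv (deriv^[r] (p m)) from
      Function.iterate_succ_apply' deriv r (p m)]
    exact hstepD
  -- the main induction
  have main : ∀ k : ℕ, k ≤ n - 2 →
      (∀ j, j < k → ∀ x ∈ Set.Ioo (0:ℝ) 1,
          HasDerivAt (deriv^[j] z) (deriv^[j+1] z x) x)
      ∧ ∀ x ∈ Set.Ioo (0:ℝ) 1, Z k x = deriv^[k] z x
          + ∑ j ∈ Finset.range (k-1),
              (∑ s ∈ Finset.Icc j (k-2),
                (-1 : ℂ)^(s+k) * (Nat.choose s j : ℂ) * deriv^[s-j] (p (n-k+s)) x)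
              * deriv^[j] z x := by
    intro k
    induction k with
    | zero =>
      intro _
      refine ⟨fun j hj => absurd hj (by omega), fun x hx => ?_⟩
      simp [hZ0]
    | succ k ih =>
      intro hk
      obtain ⟨ih1, ih2⟩ := ih (by omega)
      -- derivative of Z k everywhere on (0,1)
      have hZk : ∀ x ∈ Set.Ioo (0:ℝ) 1,
          HasDerivAt (Z k)
            (Z (k+1) x + (if 2 ≤ k+1 then (-1:ℂ)^(k+1+1) * p (n-(k+1)) x else 0) * z x) x := by
        have := chainD (k+1) (by omega) hk
        simpa using this
      -- the correction term R and its derivative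
      set A : ℕ → ℝ → ℂ := fun j y => ∑ s ∈ Finset.Icc j (k-2),
          (-1 : ℂ)^(s+k) * (Nat.choose s j : ℂ) * deriv^[s-j] (p (n-k+s)) y with hA
      set A' : ℕ → ℝ → ℂ := fun j y => ∑ s ∈ Finset.Icc j (k-2),
          (-1 : ℂ)^(s+k) * (Nat.choose s j : ℂ) * deriv^[s-j+1] (p (n-k+s)) y with hA'
      have hAd : ∀ j, j ∈ Finset.range (k-1) → ∀ x ∈ Set.Ioo (0:ℝ) 1,
          HasDerivAt (A j) (A' j x) x := by
        intro j hj x hx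
        rw [Finset.mem_range] at hj
        apply HasDerivAt.fun_sum
        intro s hs
        rw [Finset.mem_Icc] at hs
        exact ((pD (n-k+s) (s-j) (by omega) (by omega) (by omega) x hx).const_mul _)
      have hRd : ∀ x ∈ Set.Ioo (0:ℝ) 1,
          HasDerivAt (fun y => ∑ j ∈ Finset.range (k-1), A j y * deriv^[j] z y)
            (∑ j ∈ Finset.range (k-1),
              (A' j x * deriv^[j] z x + A j x * deriv^[j+1] z x)) x := by
        intro x hx
        apply HasDerivAt.fun_sum
        intro j hj
        have hj' : j < k := by rw [Finset.mem_range] at hj; omega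
        exact (hAd j hj x hx).mul (ih1 j hj' x hx)
      have step : ∀ x ∈ Set.Ioo (0:ℝ) 1,
          HasDerivAt (deriv^[k] z)
            (Z (k+1) x + (if 2 ≤ k+1 then (-1:ℂ)^(k+1+1) * p (n-(k+1)) x else 0) * z x
              - ∑ j ∈ Finset.range (k-1),
                (A' j x * deriv^[j] z x + A j x * deriv^[j+1] z x)) x
          ∧ deriv^[k+1] z x
            = Z (k+1) x + (if 2 ≤ k+1 then (-1:ℂ)^(k+1+1) * p (n-(k+1)) x else 0) * z x
              - ∑ j ∈ Finset.range (k-1),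
                (A' j x * deriv^[j] z x + A j x * deriv^[j+1] z x) := by
        intro x hxmem
        have heqs : (fun y => deriv^[k] z y + ∑ j ∈ Finset.range (k-1), A j y * deriv^[j] z y)
            =ᶠ[nhds x] Z k := by
          filter_upwards [Ioo_mem_nhds hxmem.1 hxmem.2] with y hy
          exact (ih2 y hy).symm
        have h2 : HasDerivAt
            (fun y => deriv^[k] z y + ∑ j ∈ Finset.range (k-1), A j y * deriv^[j] z y)
            (Z (k+1) x + (if 2 ≤ k+1 then (-1:ℂ)^(k+1+1) * p (n-(k+1)) x else 0) * z x) x :=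
          (hZk x hxmem).congr_of_eventuallyEq heqs
        have h3 : HasDerivAt (deriv^[k] z)
            (Z (k+1) x + (if 2 ≤ k+1 then (-1:ℂ)^(k+1+1) * p (n-(k+1)) x else 0) * z x
              - ∑ j ∈ Finset.range (k-1),
                (A' j x * deriv^[j] z x + A j x * deriv^[j+1] z x)) x := by
          have hsub := h2.fun_sub (hRd x hxmem)
          have hfe : (fun y => (deriv^[k] z y + ∑ j ∈ Finset.range (k-1), A j y * deriv^[j] z y)
              - ∑ j ∈ Finset.range (k-1), A j y * deriv^[j] z y) = deriv^[k] z := by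
            funext y; ring
          rwa [hfe] at hsub
        have h4 : deriv^[k+1] z x
            = Z (k+1) x + (if 2 ≤ k+1 then (-1:ℂ)^(k+1+1) * p (n-(k+1)) x else 0) * z x
              - ∑ j ∈ Finset.range (k-1),
                (A' j x * deriv^[j] z x + A j x * deriv^[j+1] z x) := by
          rw [Function.iterate_succ_apply']
          exact h3.deriv
        exact ⟨h4 ▸ h3, h4⟩
      refine ⟨?_, ?_⟩
      · intro j hj y hy
        rcases Nat.lt_or_ge j k with hjk | hjk
        · exact ih1 j hjk y hy
        · have hjk' : j = k := by omega
          subst hjk'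
          obtain ⟨hd, he⟩ := step y hy
          rw [he]
          exact hd
      · intro x hx
        obtain ⟨hd, he⟩ := step x hx
        rcases Nat.eq_zero_or_pos k with hk0 | hk1
        · subst hk0
          rw [if_neg (by omega)] at he
          simp only [Nat.zero_sub, Nat.add_sub_cancel, Finset.range_zero, Finset.sum_empty,
            sub_zero, zero_mul, add_zero] at he ⊢
          exact he.symm
        · rw [if_pos (show (2:ℕ) ≤ k+1 by omega)] at he
          rw [show ((-1:ℂ)^(k+1+1)) = -(-1:ℂ)^(k+1) from by rw [pow_succ]; ring] at he
          have hkey := keyIdentity n k hk1 (by omega) (fun m r => deriv^[r] (p m) x)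
            (fun j => deriv^[j] z x)
          simp only [Function.iterate_zero, id_eq] at hkey
          simp only [Nat.add_sub_cancel, show k+1-2 = k-1 from rfl]
          linear_combination hkey - he
  intro k hk x hx
  exact (main k hk).2 x hx
end
end

section
/- Let y ∈ D_F and z ∈ D_{F⋆}. Then the Lagrange bracket ⟨z, y⟩ = Σ_{k=0}^{n−1} (−1)^k z^[k] y^[n−k−1] is absolutely continuous on [0,1] and the Lagrange identity holds: (d/dx) ⟨z, y⟩ = z·y^[n] − (−1)^n y·z^[n] almost everywhere on (0,1) (here y^[n] = ℓ_n(y) and (−1)^n z^[n] = ℓ_n⋆(z) are the regularized differential expressions). -/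
open MeasureTheory

noncomputable section

section Auxiliary

open Set

lemma swap_core {g1 g2 : ℝ → ℂ} {x : ℝ} (hx : 0 ≤ x)
    (h1 : IntegrableOn g1 (Ioc 0 x)) (h2 : IntegrableOn g2 (Ioc 0 x)) :
    ∫ t in Ioc (0:ℝ) x, g1 t * (∫ s in Ioc (0:ℝ) t, g2 s)
      = ∫ s in Ioc (0:ℝ) x, (∫ t in Ioc s x, g1 t) * g2 s := by
  set μ := volume.restrict (Ioc (0:ℝ) x) with hμ
  set F : ℝ × ℝ → ℂ := ({q : ℝ × ℝ | q.2 ≤ q.1}).indicator (fun q => g1 q.1 * g2 q.2) with hF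
  have hs : MeasurableSet {q : ℝ × ℝ | q.2 ≤ q.1} := measurableSet_le measurable_snd measurable_fst
  have hFint : Integrable F (μ.prod μ) := ((h1.mul_prod h2).indicator hs)
  have swap := MeasureTheory.integral_integral_swap (f := fun t s => F (t, s)) hFint
  have hL : (∫ t, (∫ s, F (t, s) ∂μ) ∂μ)
      = ∫ t in Ioc (0:ℝ) x, g1 t * (∫ s in Ioc (0:ℝ) t, g2 s) := by
    refine setIntegral_congr_fun measurableSet_Ioc (fun t ht => ?_)
    have he : (fun s => F (t, s)) = (Iic t).indicator (fun s => g1 t * g2 s) := by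
      funext s
      simp only [hF, Set.indicator_apply, Set.mem_setOf_eq, Set.mem_Iic]
    have hset : Iic t ∩ Ioc (0:ℝ) x = Ioc 0 t := by
      ext u; simp only [mem_inter_iff, mem_Iic, mem_Ioc]
      constructor
      · rintro ⟨hu, hu1, _⟩; exact ⟨hu1, hu⟩
      · rintro ⟨hu1, hu2⟩; exact ⟨hu2, hu1, hu2.trans ht.2⟩
    rw [he, hμ, integral_indicator measurableSet_Iic, Measure.restrict_restrict measurableSet_Iic,
      hset, integral_const_mul]
  have hR : (∫ s, (∫ t, F (t, s) ∂μ) ∂μ)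
      = ∫ s in Ioc (0:ℝ) x, (∫ t in Ioc s x, g1 t) * g2 s := by
    refine setIntegral_congr_fun measurableSet_Ioc (fun s hs' => ?_)
    have he : (fun t => F (t, s)) = (Ici s).indicator (fun t => g1 t * g2 s) := by
      funext t
      simp only [hF, Set.indicator_apply, Set.mem_setOf_eq, Set.mem_Ici]
    have hset : Ici s ∩ Ioc (0:ℝ) x = Icc s x := by
      ext u; simp only [mem_inter_iff, mem_Ici, mem_Ioc, mem_Icc]
      constructor
      · rintro ⟨hu, _, hu2⟩; exact ⟨hu, hu2⟩
      · rintro ⟨hu1, hu2⟩; exact ⟨hu1, lt_of_lt_of_le hs'.1 hu1, hu2⟩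
    rw [he, hμ, integral_indicator measurableSet_Ici, Measure.restrict_restrict measurableSet_Ici,
      hset, integral_Icc_eq_integral_Ioc, integral_mul_const]
  rw [← hL, ← hR]; exact swap

lemma integrable_mul_primitive {g h : ℝ → ℂ} {x : ℝ} (hx : 0 ≤ x)
    (hg : IntegrableOn g (Ioc 0 x)) (hh : IntegrableOn h (Ioc 0 x)) :
    IntegrableOn (fun t => g t * ∫ s in Ioc (0:ℝ) t, h s) (Ioc 0 x) := by
  have hgI : IntegrableOn g (Icc 0 x) := (integrableOn_Icc_iff_integrableOn_Ioc (f := g) (a := 0) (b := x)).mpr hg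
  have hhI : IntegrableOn h (Icc 0 x) := (integrableOn_Icc_iff_integrableOn_Ioc (f := h) (a := 0) (b := x)).mpr hh
  exact (hgI.mul_continuousOn (intervalIntegral.continuousOn_primitive hhI) isCompact_Icc).mono_set
    Ioc_subset_Icc_self

lemma integrable_primitive_mul {g h : ℝ → ℂ} {x : ℝ} (hx : 0 ≤ x)
    (hg : IntegrableOn g (Ioc 0 x)) (hh : IntegrableOn h (Ioc 0 x)) :
    IntegrableOn (fun t => (∫ s in Ioc (0:ℝ) t, g s) * h t) (Ioc 0 x) := by
  have hgI : IntegrableOn g (Icc 0 x) := (integrableOn_Icc_iff_integrableOn_Ioc (f := g) (a := 0) (b := x)).mpr hg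
  have hhI : IntegrableOn h (Icc 0 x) := (integrableOn_Icc_iff_integrableOn_Ioc (f := h) (a := 0) (b := x)).mpr hh
  exact (hhI.continuousOn_mul (intervalIntegral.continuousOn_primitive hgI) isCompact_Icc).mono_set
    Ioc_subset_Icc_self

lemma parts {g1 g2 : ℝ → ℂ} {x : ℝ} (hx : 0 ≤ x)
    (h1 : IntegrableOn g1 (Ioc 0 x)) (h2 : IntegrableOn g2 (Ioc 0 x)) :
    ∫ t in Ioc (0:ℝ) x,
        (g1 t * (∫ s in Ioc (0:ℝ) t, g2 s) + (∫ s in Ioc (0:ℝ) t, g1 s) * g2 t)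
      = (∫ t in Ioc (0:ℝ) x, g1 t) * (∫ t in Ioc (0:ℝ) x, g2 t) := by
  have I1 := integrable_mul_primitive hx h1 h2
  have I2 := integrable_primitive_mul hx h1 h2
  rw [integral_add I1 I2, swap_core hx h1 h2]
  have hsplit : ∀ s ∈ Ioc (0:ℝ) x,
      (∫ t in Ioc s x, g1 t) * g2 s
        = ((∫ t in Ioc (0:ℝ) x, g1 t) - ∫ t in Ioc (0:ℝ) s, g1 t) * g2 s := by
    intro s hs
    have hu : Ioc (0:ℝ) s ∪ Ioc s x = Ioc 0 x := Ioc_union_Ioc_eq_Ioc hs.1.le hs.2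
    have hadd := setIntegral_union (s := Ioc (0:ℝ) s) (t := Ioc s x) (f := g1) (μ := volume)
      (Set.Ioc_disjoint_Ioc_of_le le_rfl) measurableSet_Ioc
      (h1.mono_set (hu ▸ (subset_union_left)))
      (h1.mono_set (hu ▸ (subset_union_right)))
    rw [hu] at hadd
    rw [hadd]; ring
  rw [setIntegral_congr_fun measurableSet_Ioc hsplit]
  have : ∀ s, ((∫ t in Ioc (0:ℝ) x, g1 t) - ∫ t in Ioc (0:ℝ) s, g1 t) * g2 s
      = (∫ t in Ioc (0:ℝ) x, g1 t) * g2 s - (∫ t in Ioc (0:ℝ) s, g1 t) * g2 s := by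
    intro s; ring
  simp only [this]
  rw [integral_sub ((h2.const_mul _)) I2, integral_const_mul]
  ring

lemma ACOn01.const_mul' {f : ℝ → ℂ} (hf : ACOn01 f) (c : ℂ) : ACOn01 (fun x => c * f x) := by
  obtain ⟨g, hgint, hg⟩ := hf
  refine ⟨fun t => c * g t, hgint.const_mul c, fun x hx => ?_⟩
  simp only [intervalIntegral.integral_const_mul, hg x hx]
  ring

lemma ACOn01.add' {f1 f2 : ℝ → ℂ} (h1 : ACOn01 f1) (h2 : ACOn01 f2) :
    ACOn01 (fun x => f1 x + f2 x) := by
  obtain ⟨g1, hg1int, hg1⟩ := h1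
  obtain ⟨g2, hg2int, hg2⟩ := h2
  refine ⟨fun t => g1 t + g2 t, hg1int.add hg2int, fun x hx => ?_⟩
  have i1 : IntervalIntegrable g1 volume 0 x := by
    rw [intervalIntegrable_iff_integrableOn_Ioc_of_le hx.1]
    exact hg1int.mono_set fun t ht => ⟨ht.1.le, ht.2.trans hx.2⟩
  have i2 : IntervalIntegrable g2 volume 0 x := by
    rw [intervalIntegrable_iff_integrableOn_Ioc_of_le hx.1]
    exact hg2int.mono_set fun t ht => ⟨ht.1.le, ht.2.trans hx.2⟩
  beta_reduce
  rw [intervalIntegral.integral_add i1 i2, hg1 x hx, hg2 x hx]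
  ring

lemma ACOn01.zero' : ACOn01 (fun _ => (0:ℂ)) :=
  ⟨fun _ => 0, integrable_zero _ _ _, fun x _ => by simp⟩

lemma ACOn01.sum' {ι : Type*} (s : Finset ι) (F : ι → ℝ → ℂ) (h : ∀ i ∈ s, ACOn01 (F i)) :
    ACOn01 (fun x => ∑ i ∈ s, F i x) := by
  classical
  induction s using Finset.induction_on with
  | empty => simpa using ACOn01.zero'
  | insert a s' hnot ih =>
    simp only [Finset.sum_insert hnot]
    exact (h a (Finset.mem_insert_self a s')).add'
      (ih fun i hi => h i (Finset.mem_insert_of_mem hi))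

lemma ACOn01.mul' {f1 f2 : ℝ → ℂ} (h1 : ACOn01 f1) (h2 : ACOn01 f2) :
    ACOn01 (fun x => f1 x * f2 x) := by
  obtain ⟨g1, hg1int, hg1⟩ := h1
  obtain ⟨g2, hg2int, hg2⟩ := h2
  have hu : Set.uIcc (0:ℝ) 1 = Set.Icc 0 1 := Set.uIcc_of_le (by norm_num)
  have hc1 : ContinuousOn f1 (Set.Icc 0 1) := by
    have hP := intervalIntegral.continuousOn_primitive_interval (a := 0) (b := 1)
      (μ := volume) (f := g1) (hu ▸ hg1int)
    rw [hu] at hP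
    exact ((continuousOn_const (c := f1 0)).add hP).congr fun x hx => hg1 x hx
  have hc2 : ContinuousOn f2 (Set.Icc 0 1) := by
    have hP := intervalIntegral.continuousOn_primitive_interval (a := 0) (b := 1)
      (μ := volume) (f := g2) (hu ▸ hg2int)
    rw [hu] at hP
    exact ((continuousOn_const (c := f2 0)).add hP).congr fun x hx => hg2 x hx
  refine ⟨fun t => g1 t * f2 t + f1 t * g2 t,
    (hg1int.mul_continuousOn hc2 isCompact_Icc).add
      (hg2int.continuousOn_mul hc1 isCompact_Icc), fun x hx => ?_⟩
  beta_reduce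
  have hx1 : x ≤ 1 := hx.2
  have hx0 : 0 ≤ x := hx.1
  have hsub : Set.Ioc (0:ℝ) x ⊆ Set.Icc 0 1 := fun t ht => ⟨ht.1.le, ht.2.trans hx1⟩
  have h1x : IntegrableOn g1 (Set.Ioc 0 x) := hg1int.mono_set hsub
  have h2x : IntegrableOn g2 (Set.Ioc 0 x) := hg2int.mono_set hsub
  rw [intervalIntegral.integral_of_le hx0]
  have hpt : ∀ t ∈ Set.Ioc (0:ℝ) x,
      g1 t * f2 t + f1 t * g2 t
        = (f2 0 * g1 t + f1 0 * g2 t)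
          + (g1 t * (∫ s in Set.Ioc (0:ℝ) t, g2 s) + (∫ s in Set.Ioc (0:ℝ) t, g1 s) * g2 t) := by
    intro t ht
    have ht' : t ∈ Set.Icc (0:ℝ) 1 := hsub ht
    rw [hg1 t ht', hg2 t ht', intervalIntegral.integral_of_le ht.1.le,
      intervalIntegral.integral_of_le ht.1.le]
    ring
  rw [setIntegral_congr_fun measurableSet_Ioc hpt]
  have Ia : IntegrableOn (fun t => f2 0 * g1 t + f1 0 * g2 t) (Set.Ioc 0 x) :=
    (h1x.const_mul _).add (h2x.const_mul _)
  have Ib : IntegrableOn (fun t =>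
      g1 t * (∫ s in Set.Ioc (0:ℝ) t, g2 s) + (∫ s in Set.Ioc (0:ℝ) t, g1 s) * g2 t)
      (Set.Ioc 0 x) := (integrable_mul_primitive hx0 h1x h2x).add
        (integrable_primitive_mul hx0 h1x h2x)
  rw [integral_add Ia Ib, parts hx0 h1x h2x,
    integral_add (h1x.const_mul _) (h2x.const_mul _), integral_const_mul, integral_const_mul,
    hg1 x hx, hg2 x hx, intervalIntegral.integral_of_le hx0, intervalIntegral.integral_of_le hx0]
  ring

lemma key_lagrange (n : ℕ) (hn : 1 ≤ n) (f : ℕ → ℕ → ℂ) (Z Y : ℕ → ℂ) :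
    ∑ k ∈ Finset.range n,
      (((-1:ℂ)^k * (Z (k+1) + ∑ j ∈ Finset.Icc 1 (k+1),
          ((-1:ℂ)^((k+1) + j + 1) * f (n-j+1) (n-(k+1)+1)) * Z (j-1))) * Y (n-k-1)
        + ((-1:ℂ)^k * Z k) * (Y (n-k) + ∑ j ∈ Finset.Icc 1 (n-k), f (n-k) j * Y (j-1)))
      = Z 0 * Y n - (-1:ℂ)^n * Y 0 * Z n := by
  classical
  set u : ℕ → ℂ := fun k => (-1:ℂ)^k * Z k * Y (n-k) with hu
  set a' : ℕ → ℕ → ℂ := fun k j =>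
    if j ≤ k + 1 then (-1:ℂ)^j * f (n-j+1) (n-k) * Z (j-1) * Y (n-k-1) else 0 with ha'
  set b' : ℕ → ℕ → ℂ := fun k j =>
    if j ≤ n - k then (-1:ℂ)^k * Z k * f (n-k) j * Y (j-1) else 0 with hb'
  have hsplit : ∀ k ∈ Finset.range n,
      ((-1:ℂ)^k * (Z (k+1) + ∑ j ∈ Finset.Icc 1 (k+1),
          ((-1:ℂ)^((k+1) + j + 1) * f (n-j+1) (n-(k+1)+1)) * Z (j-1))) * Y (n-k-1)
        + ((-1:ℂ)^k * Z k) * (Y (n-k) + ∑ j ∈ Finset.Icc 1 (n-k), f (n-k) j * Y (j-1))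
      = (u k - u (k+1)) + ((∑ j ∈ Finset.Icc 1 n, a' k j) + (∑ j ∈ Finset.Icc 1 n, b' k j)) := by
    intro k hk
    have hkn : k < n := Finset.mem_range.mp hk
    have hA : ((-1:ℂ)^k * (∑ j ∈ Finset.Icc 1 (k+1),
        ((-1:ℂ)^((k+1) + j + 1) * f (n-j+1) (n-(k+1)+1)) * Z (j-1))) * Y (n-k-1)
        = ∑ j ∈ Finset.Icc 1 n, a' k j := by
      rw [Finset.mul_sum, Finset.sum_mul]
      rw [show (∑ j ∈ Finset.Icc 1 n, a' k j) = ∑ j ∈ Finset.Icc 1 (k+1), a' k j from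
        (Finset.sum_subset (Finset.Icc_subset_Icc_right (by omega)) (fun j hj hj' => by
          simp only [ha', Finset.mem_Icc] at hj hj' ⊢
          rw [if_neg (by omega)])).symm]
      refine Finset.sum_congr rfl (fun j hj => ?_)
      simp only [Finset.mem_Icc] at hj
      simp only [ha']
      rw [if_pos hj.2]
      have hidx : n - (k+1) + 1 = n - k := by omega
      have hsgn : (-1:ℂ)^k * (-1:ℂ)^((k+1) + j + 1) = (-1:ℂ)^j := by
        rw [← pow_add, show k + ((k+1) + j + 1) = j + 2*(k+1) by ring, pow_add, pow_mul,
          neg_one_sq, one_pow, mul_one]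
      rw [hidx]
      calc (-1:ℂ)^k * (((-1:ℂ)^((k+1) + j + 1) * f (n-j+1) (n-k)) * Z (j-1)) * Y (n-k-1)
          = ((-1:ℂ)^k * (-1:ℂ)^((k+1) + j + 1)) * f (n-j+1) (n-k) * Z (j-1) * Y (n-k-1) := by
            ring
        _ = (-1:ℂ)^j * f (n-j+1) (n-k) * Z (j-1) * Y (n-k-1) := by rw [hsgn]
    have hB : ((-1:ℂ)^k * Z k) * (∑ j ∈ Finset.Icc 1 (n-k), f (n-k) j * Y (j-1))
        = ∑ j ∈ Finset.Icc 1 n, b' k j := by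
      rw [Finset.mul_sum]
      rw [show (∑ j ∈ Finset.Icc 1 n, b' k j) = ∑ j ∈ Finset.Icc 1 (n-k), b' k j from
        (Finset.sum_subset (Finset.Icc_subset_Icc_right (by omega)) (fun j hj hj' => by
          simp only [hb', Finset.mem_Icc] at hj hj' ⊢
          rw [if_neg (by omega)])).symm]
      refine Finset.sum_congr rfl (fun j hj => ?_)
      simp only [Finset.mem_Icc] at hj
      simp only [hb']
      rw [if_pos hj.2]
      ring
    have htel : u k - u (k+1) = ((-1:ℂ)^k * Z (k+1)) * Y (n-k-1) + ((-1:ℂ)^k * Z k) * Y (n-k) := by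
      simp only [hu, Nat.sub_sub, pow_succ]
      ring
    rw [← hA, ← hB, htel]
    ring
  rw [Finset.sum_congr rfl hsplit, Finset.sum_add_distrib, Finset.sum_range_sub' u n,
    Finset.sum_add_distrib]
  have hAB : (∑ k ∈ Finset.range n, ∑ j ∈ Finset.Icc 1 n, a' k j)
      = ∑ k ∈ Finset.range n, ∑ j ∈ Finset.Icc 1 n, -(b' k j) := by
    rw [← Finset.sum_product' _ _ (fun k j => a' k j),
      ← Finset.sum_product' _ _ (fun k j => -(b' k j))]
    refine Finset.sum_nbij' (fun p => (p.2 - 1, n - p.1)) (fun q => (n - q.2, q.1 + 1))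
      ?_ ?_ ?_ ?_ ?_
    · rintro ⟨k, j⟩ hp
      simp only [Finset.mem_product, Finset.mem_range, Finset.mem_Icc] at hp ⊢
      omega
    · rintro ⟨k, j⟩ hp
      simp only [Finset.mem_product, Finset.mem_range, Finset.mem_Icc] at hp ⊢
      omega
    · rintro ⟨k, j⟩ hp
      simp only [Finset.mem_product, Finset.mem_range, Finset.mem_Icc] at hp
      simp only [Prod.mk.injEq]
      omega
    · rintro ⟨k, j⟩ hp
      simp only [Finset.mem_product, Finset.mem_range, Finset.mem_Icc] at hp
      simp only [Prod.mk.injEq]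
      omega
    · rintro ⟨k, j⟩ hp
      simp only [Finset.mem_product, Finset.mem_range, Finset.mem_Icc] at hp
      simp only [ha', hb']
      by_cases hc : j ≤ k + 1
      · obtain ⟨j', rfl⟩ : ∃ j', j = j' + 1 := ⟨j - 1, by omega⟩
        rw [if_pos hc, if_pos (by omega)]
        simp only [Nat.add_sub_cancel]
        have h1 : n - j' = n - (j' + 1) + 1 := by omega
        rw [h1, pow_succ]
        ring
      · rw [if_neg hc, if_neg (by omega), neg_zero]
  rw [hAB]
  simp only [Finset.sum_neg_distrib]
  have h0 : u 0 = Z 0 * Y n := by simp [hu]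
  have h1 : u n = (-1:ℂ)^n * Y 0 * Z n := by simp [hu]; ring
  rw [h0, h1]
  ring

end Auxiliary

/-
STATEMENT 5: Let y ∈ D_F and z ∈ D_{F⋆}. Then the Lagrange bracket
⟨z, y⟩ = Σ_{k=0}^{n−1} (−1)^k z^[k] y^[n−k−1] is absolutely continuous on [0,1]
and the Lagrange identity holds:
(d/dx) ⟨z, y⟩ = z·y^[n] − (−1)^n y·z^[n] a.e. on (0,1)
(here y^[n] = ℓ_n(y) and (−1)^n z^[n] = ℓ_n⋆(z)).
-/
theorem statement5
    (n : ℕ) (hn : 3 ≤ n)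
    (σ : ℝ → ℂ) (hσ : MemLp σ 2 (volume.restrict (Set.Icc (0:ℝ) 1)))
    (p : ℕ → ℝ → ℂ) (hp : ∀ k : ℕ, 1 ≤ k → k ≤ n - 2 → MemW2 (k-1) (p k))
    (y : ℝ → ℂ) (Y : ℕ → ℝ → ℂ) (hY0 : Y 0 = y)
    (hY : QuasiChain n (Fmat n σ p) Y)
    (z : ℝ → ℂ) (Z : ℕ → ℝ → ℂ) (hZ0 : Z 0 = z)
    (hZ : QuasiChain n (Fstar n σ p) Z) :
    ACOn01 (fun x => ∑ k ∈ Finset.range n, (-1 : ℂ)^k * Z k x * Y (n-k-1) x) ∧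
    ∀ᵐ x ∂(volume.restrict (Set.Ioo (0:ℝ) 1)),
      HasDerivAt (fun t => ∑ k ∈ Finset.range n, (-1 : ℂ)^k * Z k t * Y (n-k-1) t)
        (z x * Y n x - (-1 : ℂ)^n * y x * Z n x) x := by
  constructor
  · refine ACOn01.sum' (Finset.range n) (fun k => fun x => (-1:ℂ)^k * Z k x * Y (n-k-1) x)
      (fun k hk => ?_)
    have hkn : k < n := Finset.mem_range.mp hk
    exact ((hZ.1 k (by omega)).const_mul' ((-1:ℂ)^k)).mul' (hY.1 (n-k-1) (by omega))
  · have hyd : ∀ᵐ x ∂(volume.restrict (Set.Ioo (0:ℝ) 1)), ∀ k : ℕ, 1 ≤ k → k ≤ n →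
        HasDerivAt (Y (k-1))
          (Y k x + ∑ j ∈ Finset.Icc 1 k, Fmat n σ p k j x * Y (j-1) x) x := by
      rw [MeasureTheory.ae_all_iff]
      intro k
      by_cases h : 1 ≤ k ∧ k ≤ n
      · filter_upwards [hY.2 k h.1 h.2] with x hx
        exact fun _ _ => hx
      · filter_upwards with x h1 h2
        exact absurd ⟨h1, h2⟩ h
    have hzd : ∀ᵐ x ∂(volume.restrict (Set.Ioo (0:ℝ) 1)), ∀ k : ℕ, 1 ≤ k → k ≤ n →
        HasDerivAt (Z (k-1))
          (Z k x + ∑ j ∈ Finset.Icc 1 k, Fstar n σ p k j x * Z (j-1) x) x := by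
      rw [MeasureTheory.ae_all_iff]
      intro k
      by_cases h : 1 ≤ k ∧ k ≤ n
      · filter_upwards [hZ.2 k h.1 h.2] with x hx
        exact fun _ _ => hx
      · filter_upwards with x h1 h2
        exact absurd ⟨h1, h2⟩ h
    filter_upwards [hyd, hzd] with x hy hz
    have hsum : HasDerivAt
        (fun t => ∑ k ∈ Finset.range n, (-1 : ℂ)^k * Z k t * Y (n-k-1) t)
        (∑ k ∈ Finset.range n,
          (((-1:ℂ)^k * (Z (k+1) x + ∑ j ∈ Finset.Icc 1 (k+1),
              Fstar n σ p (k+1) j x * Z (j-1) x)) * Y (n-k-1) x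
            + ((-1:ℂ)^k * Z k x) * (Y (n-k) x
              + ∑ j ∈ Finset.Icc 1 (n-k), Fmat n σ p (n-k) j x * Y (j-1) x))) x := by
      apply HasDerivAt.fun_sum
      intro k hk
      have hkn : k < n := Finset.mem_range.mp hk
      have h1 := hz (k+1) (by omega) (by omega)
      have h2 := hy (n-k) (by omega) (by omega)
      simp only [Nat.add_sub_cancel] at h1
      exact (h1.const_mul ((-1:ℂ)^k)).mul h2
    have heq : (∑ k ∈ Finset.range n,
          (((-1:ℂ)^k * (Z (k+1) x + ∑ j ∈ Finset.Icc 1 (k+1),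
              Fstar n σ p (k+1) j x * Z (j-1) x)) * Y (n-k-1) x
            + ((-1:ℂ)^k * Z k x) * (Y (n-k) x
              + ∑ j ∈ Finset.Icc 1 (n-k), Fmat n σ p (n-k) j x * Y (j-1) x)))
        = z x * Y n x - (-1:ℂ)^n * y x * Z n x := by
      rw [← hY0, ← hZ0]
      simp only [Fstar]
      exact key_lagrange n (by omega) (fun a b => Fmat n σ p a b x)
        (fun k => Z k x) (fun k => Y k x)
    rw [← heq]
    exact hsum
end
end

section
/- Let λ, μ ∈ ℂ, let y ∈ D_F satisfy y^[n] = λ y almost everywhere on (0,1), and let z ∈ D_{F⋆} satisfy (−1)^n z^[n] = μ z almost everywhere on (0,1). Then the Lagrange bracket ⟨z, y⟩ = Σ_{k=0}^{n−1} (−1)^k z^[k] y^[n−k−1] satisfies (d/dx) ⟨z, y⟩ = (λ − μ) y z almost everywhere on (0,1). -/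
open MeasureTheory

noncomputable section

/-
STATEMENT 6: Let λ, μ ∈ ℂ, let y ∈ D_F satisfy y^[n] = λy a.e. on (0,1) and
z ∈ D_{F⋆} satisfy (−1)^n z^[n] = μz a.e. on (0,1). Then the Lagrange bracket
⟨z, y⟩ = Σ_{k=0}^{n−1} (−1)^k z^[k] y^[n−k−1] satisfies
(d/dx) ⟨z, y⟩ = (λ − μ) y z a.e. on (0,1).
-/
theorem statement6
    (n : ℕ) (hn : 3 ≤ n)
    (σ : ℝ → ℂ) (hσ : MemLp σ 2 (volume.restrict (Set.Icc (0:ℝ) 1)))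
    (p : ℕ → ℝ → ℂ) (hp : ∀ k : ℕ, 1 ≤ k → k ≤ n - 2 → MemW2 (k-1) (p k))
    (lam mu : ℂ)
    (y : ℝ → ℂ) (Y : ℕ → ℝ → ℂ) (hY0 : Y 0 = y)
    (hY : QuasiChain n (Fmat n σ p) Y)
    (hyeq : ∀ᵐ x ∂(volume.restrict (Set.Ioo (0:ℝ) 1)), Y n x = lam * y x)
    (z : ℝ → ℂ) (Z : ℕ → ℝ → ℂ) (hZ0 : Z 0 = z)
    (hZ : QuasiChain n (Fstar n σ p) Z)
    (hzeq : ∀ᵐ x ∂(volume.restrict (Set.Ioo (0:ℝ) 1)),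
      (-1 : ℂ)^n * Z n x = mu * z x) :
    ∀ᵐ x ∂(volume.restrict (Set.Ioo (0:ℝ) 1)),
      HasDerivAt (fun t => ∑ k ∈ Finset.range n, (-1 : ℂ)^k * Z k t * Y (n-k-1) t)
        ((lam - mu) * (y x * z x)) x := by
  have hYd := hY.2
  have hZd := hZ.2
  have hYae : ∀ᵐ x ∂(volume.restrict (Set.Ioo (0:ℝ) 1)), ∀ k : ℕ, 1 ≤ k → k ≤ n →
      HasDerivAt (Y (k-1)) (Y k x + ∑ j ∈ Finset.Icc 1 k, Fmat n σ p k j x * Y (j-1) x) x := by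
    rw [MeasureTheory.ae_all_iff]
    intro k
    by_cases hk : 1 ≤ k ∧ k ≤ n
    · filter_upwards [hYd k hk.1 hk.2] with x h _ _
      exact h
    · filter_upwards with x h1 h2
      exact absurd ⟨h1, h2⟩ hk
  have hZae : ∀ᵐ x ∂(volume.restrict (Set.Ioo (0:ℝ) 1)), ∀ k : ℕ, 1 ≤ k → k ≤ n →
      HasDerivAt (Z (k-1)) (Z k x + ∑ j ∈ Finset.Icc 1 k, Fstar n σ p k j x * Z (j-1) x) x := by
    rw [MeasureTheory.ae_all_iff]
    intro k
    by_cases hk : 1 ≤ k ∧ k ≤ n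
    · filter_upwards [hZd k hk.1 hk.2] with x h _ _
      exact h
    · filter_upwards with x h1 h2
      exact absurd ⟨h1, h2⟩ hk
  filter_upwards [hYae, hZae, hyeq, hzeq] with x hYx hZx hy hz
  have hterm : ∀ k ∈ Finset.range n,
      HasDerivAt (fun t => (-1:ℂ)^k * Z k t * Y (n-k-1) t)
        (((-1:ℂ)^k * (Z (k+1) x + ∑ j ∈ Finset.Icc 1 (k+1), Fstar n σ p (k+1) j x * Z (j-1) x)) * Y (n-k-1) x
          + ((-1:ℂ)^k * Z k x) * (Y (n-k) x + ∑ j ∈ Finset.Icc 1 (n-k), Fmat n σ p (n-k) j x * Y (j-1) x)) x := by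
    intro k hk
    rw [Finset.mem_range] at hk
    have hZk := hZx (k+1) (by omega) (by omega)
    have hYk := hYx (n-k) (by omega) (by omega)
    simp only [Nat.add_sub_cancel] at hZk
    exact (hZk.const_mul ((-1:ℂ)^k)).mul hYk
  have hD := HasDerivAt.sum hterm
  have key : (∑ k ∈ Finset.range n,
      (((-1:ℂ)^k * (Z (k+1) x + ∑ j ∈ Finset.Icc 1 (k+1), Fstar n σ p (k+1) j x * Z (j-1) x)) * Y (n-k-1) x
        + ((-1:ℂ)^k * Z k x) * (Y (n-k) x + ∑ j ∈ Finset.Icc 1 (n-k), Fmat n σ p (n-k) j x * Y (j-1) x)))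
      = (lam - mu) * (y x * z x) := by
    have split : ∀ k ∈ Finset.range n,
        (((-1:ℂ)^k * (Z (k+1) x + ∑ j ∈ Finset.Icc 1 (k+1), Fstar n σ p (k+1) j x * Z (j-1) x)) * Y (n-k-1) x
          + ((-1:ℂ)^k * Z k x) * (Y (n-k) x + ∑ j ∈ Finset.Icc 1 (n-k), Fmat n σ p (n-k) j x * Y (j-1) x))
        = (((-1:ℂ)^k * Z k x * Y (n-k) x) - ((-1:ℂ)^(k+1) * Z (k+1) x * Y (n-(k+1)) x))
          + ( ((-1:ℂ)^k * Y (n-k-1) x) * (∑ j ∈ Finset.Icc 1 (k+1), Fstar n σ p (k+1) j x * Z (j-1) x)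
            + ((-1:ℂ)^k * Z k x) * (∑ j ∈ Finset.Icc 1 (n-k), Fmat n σ p (n-k) j x * Y (j-1) x)) := by
      intro k _
      have hnk : n - (k+1) = n - k - 1 := by omega
      rw [hnk]; ring
    rw [Finset.sum_congr rfl split, Finset.sum_add_distrib,
      Finset.sum_range_sub' (fun k => (-1:ℂ)^k * Z k x * Y (n-k) x) n,
      Finset.sum_add_distrib]
    have e1 : (∑ k ∈ Finset.range n, ((-1:ℂ)^k * Y (n-k-1) x)
          * (∑ j ∈ Finset.Icc 1 (k+1), Fstar n σ p (k+1) j x * Z (j-1) x))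
        = ∑ q ∈ (Finset.range n).sigma (fun k => Finset.Icc 1 (k+1)),
            ((-1:ℂ)^q.1 * Y (n-q.1-1) x) * (Fstar n σ p (q.1+1) q.2 x * Z (q.2-1) x) := by
      rw [Finset.sum_sigma]
      exact Finset.sum_congr rfl fun k _ => Finset.mul_sum _ _ _
    have e2 : (∑ k ∈ Finset.range n, ((-1:ℂ)^k * Z k x)
          * (∑ j ∈ Finset.Icc 1 (n-k), Fmat n σ p (n-k) j x * Y (j-1) x))
        = ∑ q ∈ (Finset.range n).sigma (fun k => Finset.Icc 1 (n-k)),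
            ((-1:ℂ)^q.1 * Z q.1 x) * (Fmat n σ p (n-q.1) q.2 x * Y (q.2-1) x) := by
      rw [Finset.sum_sigma]
      exact Finset.sum_congr rfl fun k _ => Finset.mul_sum _ _ _
    have e3 : (∑ q ∈ (Finset.range n).sigma (fun k => Finset.Icc 1 (k+1)),
            ((-1:ℂ)^q.1 * Y (n-q.1-1) x) * (Fstar n σ p (q.1+1) q.2 x * Z (q.2-1) x))
        = ∑ q ∈ (Finset.range n).sigma (fun k => Finset.Icc 1 (n-k)),
            -(((-1:ℂ)^q.1 * Z q.1 x) * (Fmat n σ p (n-q.1) q.2 x * Y (q.2-1) x)) := by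
      refine Finset.sum_bij' (fun q _ => (⟨q.2 - 1, n - q.1⟩ : Σ _ : ℕ, ℕ))
        (fun q _ => (⟨n - q.2, q.1 + 1⟩ : Σ _ : ℕ, ℕ)) ?_ ?_ ?_ ?_ ?_
      · rintro ⟨k, j⟩ hq
        simp only [Finset.mem_sigma, Finset.mem_range, Finset.mem_Icc] at hq ⊢
        omega
      · rintro ⟨k, j⟩ hq
        simp only [Finset.mem_sigma, Finset.mem_range, Finset.mem_Icc] at hq ⊢
        omega
      · rintro ⟨k, j⟩ hq
        simp only [Finset.mem_sigma, Finset.mem_range, Finset.mem_Icc] at hq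
        exact Sigma.ext (by first | omega | (simp; omega) | simp) (heq_of_eq (by first | omega | (simp; omega) | simp))
      · rintro ⟨k, j⟩ hq
        simp only [Finset.mem_sigma, Finset.mem_range, Finset.mem_Icc] at hq
        exact Sigma.ext (by first | omega | (simp; omega) | simp) (heq_of_eq (by first | omega | (simp; omega) | simp))
      · rintro ⟨k, j⟩ hq
        simp only [Finset.mem_sigma, Finset.mem_range, Finset.mem_Icc] at hq
        obtain ⟨hkn, hj1, hjk⟩ := hq
        obtain ⟨j', rfl⟩ : ∃ j', j = j' + 1 := ⟨j - 1, by omega⟩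
        simp only
        have i1 : n - (j'+1) + 1 = n - j' := by omega
        have i2 : n - (k+1) + 1 = n - k := by omega
        rw [Fstar]
        simp only [Nat.add_sub_cancel, i1, i2]
        have hpow : (-1:ℂ)^(k + 1 + (j'+1) + 1) = -((-1:ℂ)^k * (-1:ℂ)^j') := by
          have : k + 1 + (j'+1) + 1 = (k + j') + 3 := by ring
          rw [this, pow_add, pow_add]; ring
        rw [hpow]
        have hkk : (-1:ℂ)^k * (-1:ℂ)^k = 1 := by rw [← mul_pow]; norm_num
        linear_combination (-((-1:ℂ)^j' * Fmat n σ p (n - j') (n - k) x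
          * Y (n-k-1) x * Z j' x)) * hkk
    rw [e1, e2, e3, Finset.sum_neg_distrib, neg_add_cancel]
    simp only [pow_zero, one_mul, Nat.sub_zero, Nat.sub_self, hZ0, hY0, hy]
    linear_combination (-(y x)) * hz
  rw [key, Finset.sum_fn] at hD
  exact hD
end
end

section
/- Suppose (ξ_l)_{l≥1} is a nonnegative sequence in ℓ² and R_{v₀,v} ∈ ℂ (v₀, v ∈ V) satisfy |R_{(l₀,k₀,ε₀),(l,k,ε)}| ≤ ξ_l/(|l−l₀|+1) for all (l₀,k₀,ε₀), (l,k,ε) ∈ V. Then for every a ∈ m and every v₀ ∈ V the series (R a)_{v₀} := Σ_{v ∈ V} R_{v₀,v} a_v converges absolutely, and R defines a bounded linear operator on m with operator norm ‖R‖ ≤ 2(n−1)(π/√3)·(Σ_{l=1}^{∞} ξ_l²)^{1/2}. Consequently, if 2(n−1)(π/√3)·(Σ_l ξ_l²)^{1/2} < 1, then the operator I − R has a bounded inverse on m. -/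
noncomputable section

open scoped ENNReal

/-- The index set V = { (l,k,ε) : l ≥ 1, 1 ≤ k ≤ n−1, ε ∈ {0,1} }. -/
def VIdx (n : ℕ) : Type :=
  {l : ℕ // 1 ≤ l} × {k : ℕ // 1 ≤ k ∧ k ≤ n - 1} × Bool

/-- The Banach space m of bounded complex sequences indexed by V, with the sup
norm. -/
def mSpace (n : ℕ) : Type := lp (fun _ : VIdx n => ℂ) ∞

instance (n : ℕ) : NormedAddCommGroup (mSpace n) :=
  inferInstanceAs (NormedAddCommGroup (lp (fun _ : VIdx n => ℂ) ∞))

instance (n : ℕ) : NormedSpace ℂ (mSpace n) :=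
  inferInstanceAs (NormedSpace ℂ (lp (fun _ : VIdx n => ℂ) ∞))

instance (n : ℕ) : CoeFun (mSpace n) (fun _ => VIdx n → ℂ) :=
  inferInstanceAs (CoeFun (lp (fun _ : VIdx n => ℂ) ∞) (fun _ => VIdx n → ℂ))

instance (n : ℕ) : CompleteSpace (mSpace n) :=
  inferInstanceAs (CompleteSpace (lp (fun _ : VIdx n => ℂ) ∞))

instance (n : ℕ) : Fintype {k : ℕ // 1 ≤ k ∧ k ≤ n - 1} :=
  Fintype.subtype (Finset.Icc 1 (n - 1)) (by intro x; simp [Finset.mem_Icc])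

namespace BddOpAux

lemma hasSum_shift : HasSum (fun m : ℕ => 1 / ((m : ℝ) + 1) ^ 2) (Real.pi ^ 2 / 6) := by
  have h2 : HasSum (fun n : ℕ => (1 : ℝ) / (n : ℝ) ^ 2) (Real.pi ^ 2 / 6 + ∑ i ∈ Finset.range 1, (1 : ℝ) / (i : ℝ) ^ 2) := by
    simpa using hasSum_zeta_two
  have h := (hasSum_nat_add_iff (f := fun n : ℕ => (1 : ℝ) / (n : ℝ) ^ 2) 1).mpr h2
  have he : (fun m : ℕ => 1 / ((m : ℝ) + 1) ^ 2) = fun n : ℕ => (1 : ℝ) / ((n + 1 : ℕ) : ℝ) ^ 2 := by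
    funext m; push_cast; ring
  rw [he]
  exact h

lemma D_bound (l₀ : ℕ) :
    Summable (fun j : ℕ => ((|((j : ℝ) + 1) - (l₀ : ℝ)| + 1)⁻¹) ^ 2) ∧
      ∑' j : ℕ, ((|((j : ℝ) + 1) - (l₀ : ℝ)| + 1)⁻¹) ^ 2 ≤ Real.pi ^ 2 / 3 := by
  classical
  set g : ℕ → ℝ := fun m => 1 / ((m : ℝ) + 1) ^ 2 with hg
  have hgs : Summable g := hasSum_shift.summable
  have hgt : ∑' m, g m = Real.pi ^ 2 / 6 := hasSum_shift.tsum_eq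
  have hgnn : ∀ m, 0 ≤ g m := fun m => by positivity
  set F : ℕ → ℝ := fun j => ((|((j : ℝ) + 1) - (l₀ : ℝ)| + 1)⁻¹) ^ 2 with hF
  have hFnn : ∀ j, 0 ≤ F j := fun j => by positivity
  set m : ℕ → ℕ := fun j => if j + 1 ≤ l₀ then l₀ - (j + 1) else j + 1 - l₀ with hm
  have hFg : ∀ j, F j = g (m j) := by
    intro j
    by_cases hj : j + 1 ≤ l₀
    · have h1 : ((j : ℝ) + 1) ≤ (l₀ : ℝ) := by exact_mod_cast hj
      have h2 : ((l₀ - (j + 1) : ℕ) : ℝ) = (l₀ : ℝ) - ((j : ℝ) + 1) := by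
        rw [Nat.cast_sub hj]; push_cast; ring
      have h3 : |((j : ℝ) + 1) - (l₀ : ℝ)| + 1 = ((l₀ - (j + 1) : ℕ) : ℝ) + 1 := by
        rw [abs_of_nonpos (sub_nonpos.mpr h1), h2]; ring
      simp only [hF, hm, hg, if_pos hj, h3, one_div, inv_pow]
    · have h1 : (l₀ : ℝ) ≤ ((j : ℝ) + 1) := by
        have : l₀ ≤ j + 1 := by omega
        exact_mod_cast this
      have h2 : ((j + 1 - l₀ : ℕ) : ℝ) = ((j : ℝ) + 1) - (l₀ : ℝ) := by
        rw [Nat.cast_sub (by omega)]; push_cast; ring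
      have h3 : |((j : ℝ) + 1) - (l₀ : ℝ)| + 1 = ((j + 1 - l₀ : ℕ) : ℝ) + 1 := by
        rw [abs_of_nonneg (sub_nonneg.mpr h1), h2]
      simp only [hF, hm, hg, if_neg hj, h3, one_div, inv_pow]
  have key : ∀ u : Finset ℕ, ∑ j ∈ u, F j ≤ Real.pi ^ 2 / 3 := by
    intro u
    have hsplit := Finset.sum_filter_add_sum_filter_not u (fun j => j + 1 ≤ l₀) F
    have h₁ : ∑ j ∈ u.filter (fun j => j + 1 ≤ l₀), F j ≤ Real.pi ^ 2 / 6 := by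
      have hinj : ∀ x ∈ u.filter (fun j => j + 1 ≤ l₀), ∀ y ∈ u.filter (fun j => j + 1 ≤ l₀),
          m x = m y → x = y := by
        intro x hx y hy hxy
        simp only [Finset.mem_filter] at hx hy
        simp only [hm, if_pos hx.2, if_pos hy.2] at hxy
        omega
      calc ∑ j ∈ u.filter (fun j => j + 1 ≤ l₀), F j
          = ∑ j ∈ u.filter (fun j => j + 1 ≤ l₀), g (m j) :=
            Finset.sum_congr rfl fun j _ => hFg j
        _ = ∑ k ∈ (u.filter (fun j => j + 1 ≤ l₀)).image m, g k := (Finset.sum_image hinj).symm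
        _ ≤ ∑' k, g k := Summable.sum_le_tsum _ (fun k _ => hgnn k) hgs
        _ = Real.pi ^ 2 / 6 := hgt
    have h₂ : ∑ j ∈ u.filter (fun j => ¬(j + 1 ≤ l₀)), F j ≤ Real.pi ^ 2 / 6 := by
      have hinj : ∀ x ∈ u.filter (fun j => ¬(j + 1 ≤ l₀)), ∀ y ∈ u.filter (fun j => ¬(j + 1 ≤ l₀)),
          m x = m y → x = y := by
        intro x hx y hy hxy
        simp only [Finset.mem_filter] at hx hy
        simp only [hm, if_neg hx.2, if_neg hy.2] at hxy
        omega
      calc ∑ j ∈ u.filter (fun j => ¬(j + 1 ≤ l₀)), F j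
          = ∑ j ∈ u.filter (fun j => ¬(j + 1 ≤ l₀)), g (m j) :=
            Finset.sum_congr rfl fun j _ => hFg j
        _ = ∑ k ∈ (u.filter (fun j => ¬(j + 1 ≤ l₀))).image m, g k := (Finset.sum_image hinj).symm
        _ ≤ ∑' k, g k := Summable.sum_le_tsum _ (fun k _ => hgnn k) hgs
        _ = Real.pi ^ 2 / 6 := hgt
    calc ∑ j ∈ u, F j
        = ∑ j ∈ u.filter (fun j => j + 1 ≤ l₀), F j
            + ∑ j ∈ u.filter (fun j => ¬(j + 1 ≤ l₀)), F j := hsplit.symm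
      _ ≤ Real.pi ^ 2 / 6 + Real.pi ^ 2 / 6 := add_le_add h₁ h₂
      _ = Real.pi ^ 2 / 3 := by ring
  have hFs : Summable F := summable_of_sum_le (fun j => hFnn j) key
  exact ⟨hFs, Summable.tsum_le_of_sum_le hFs key⟩

lemma cauchy_schwarz {f g : ℕ → ℝ} (hf : ∀ i, 0 ≤ f i) (hg : ∀ i, 0 ≤ g i)
    (hf2 : Summable fun i => f i ^ 2) (hg2 : Summable fun i => g i ^ 2) :
    Summable (fun i => f i * g i) ∧
      ∑' i, f i * g i ≤ Real.sqrt (∑' i, f i ^ 2) * Real.sqrt (∑' i, g i ^ 2) := by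
  have hs : Summable (fun i => f i * g i) := by
    refine Summable.of_nonneg_of_le (fun i => mul_nonneg (hf i) (hg i)) (fun i => ?_)
      ((hf2.add hg2).div_const 2)
    have := two_mul_le_add_sq (f i) (g i)
    linarith [two_mul_le_add_sq (f i) (g i)]
  refine ⟨hs, Summable.tsum_le_of_sum_le hs fun u => ?_⟩
  have h1 := Finset.sum_mul_sq_le_sq_mul_sq u f g
  have h2 : ∑ i ∈ u, f i ^ 2 ≤ ∑' i, f i ^ 2 :=
    Summable.sum_le_tsum u (fun i _ => sq_nonneg _) hf2
  have h3 : ∑ i ∈ u, g i ^ 2 ≤ ∑' i, g i ^ 2 :=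
    Summable.sum_le_tsum u (fun i _ => sq_nonneg _) hg2
  have h4 : 0 ≤ ∑ i ∈ u, f i * g i :=
    Finset.sum_nonneg fun i _ => mul_nonneg (hf i) (hg i)
  have h5 : (∑ i ∈ u, f i * g i) ^ 2 ≤ (∑' i, f i ^ 2) * (∑' i, g i ^ 2) :=
    h1.trans (mul_le_mul h2 h3 (Finset.sum_nonneg fun i _ => sq_nonneg _)
      ((Finset.sum_nonneg (fun i _ => sq_nonneg (f i))).trans h2))
  calc ∑ i ∈ u, f i * g i = Real.sqrt ((∑ i ∈ u, f i * g i) ^ 2) := (Real.sqrt_sq h4).symm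
    _ ≤ Real.sqrt ((∑' i, f i ^ 2) * (∑' i, g i ^ 2)) := Real.sqrt_le_sqrt h5
    _ = _ := Real.sqrt_mul (tsum_nonneg fun i => sq_nonneg _) _

end BddOpAux

theorem bounded_operator_and_inverse
    (n : ℕ) (hn : 2 ≤ n)
    (ξ : ℕ → ℝ) (hξ : ∀ l, 0 ≤ ξ l)
    (hsum : Summable (fun l : ℕ => (ξ (l+1))^2))
    (R : VIdx n → VIdx n → ℂ)
    (hR : ∀ v₀ v : VIdx n,
      ‖R v₀ v‖ ≤ ξ v.1.1 / (|(v.1.1 : ℝ) - (v₀.1.1 : ℝ)| + 1)) :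
    (∀ a : mSpace n, ∀ v₀ : VIdx n, Summable (fun v => ‖R v₀ v * a v‖)) ∧
    (∃ T : mSpace n →L[ℂ] mSpace n,
      (∀ a : mSpace n, ∀ v₀ : VIdx n, (T a) v₀ = ∑' v : VIdx n, R v₀ v * a v) ∧
      ‖T‖ ≤ 2 * (n - 1) * (Real.pi / Real.sqrt 3)
              * Real.sqrt (∑' l : ℕ, (ξ (l+1))^2) ∧
      (2 * (n - 1) * (Real.pi / Real.sqrt 3)
              * Real.sqrt (∑' l : ℕ, (ξ (l+1))^2) < 1 →
        ∃ S : mSpace n →L[ℂ] mSpace n,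
          S.comp (ContinuousLinearMap.id ℂ (mSpace n) - T)
            = ContinuousLinearMap.id ℂ (mSpace n) ∧
          (ContinuousLinearMap.id ℂ (mSpace n) - T).comp S
            = ContinuousLinearMap.id ℂ (mSpace n))) := by
  classical
  set C : ℝ := 2 * ((n : ℝ) - 1) * (Real.pi / Real.sqrt 3)
      * Real.sqrt (∑' l : ℕ, (ξ (l+1))^2) with hCdef
  have hn1 : (1 : ℝ) ≤ (n : ℝ) := by exact_mod_cast (by omega : 1 ≤ n)
  have hC0 : 0 ≤ C := by
    have h1 : 0 ≤ Real.pi / Real.sqrt 3 := div_nonneg Real.pi_nonneg (Real.sqrt_nonneg 3)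
    have h2 : 0 ≤ (n : ℝ) - 1 := by linarith
    positivity
  have hπ3 : Real.sqrt (Real.pi ^ 2 / 3) = Real.pi / Real.sqrt 3 := by
    rw [Real.sqrt_div (sq_nonneg Real.pi) 3, Real.sqrt_sq Real.pi_nonneg]
  -- the equivalence ℕ ≃ {l // 1 ≤ l}
  let e : ℕ ≃ {l : ℕ // 1 ≤ l} :=
    ⟨fun j => ⟨j + 1, Nat.le_add_left 1 j⟩, fun x => x.1 - 1,
      fun j => by simp, fun x => Subtype.ext (Nat.succ_pred_eq_of_pos x.2)⟩
  -- key estimate: the row sums of the majorant are bounded by C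
  have key : ∀ v₀ : VIdx n,
      Summable (fun v : VIdx n => ξ v.1.1 / (|(v.1.1 : ℝ) - (v₀.1.1 : ℝ)| + 1)) ∧
      (∑' v : VIdx n, ξ v.1.1 / (|(v.1.1 : ℝ) - (v₀.1.1 : ℝ)| + 1)) ≤ C := by
    intro v₀
    set l₀ := v₀.1.1 with hl₀
    set h : {l : ℕ // 1 ≤ l} → ℝ := fun x => ξ x.1 / (|(x.1 : ℝ) - (l₀ : ℝ)| + 1) with hh
    have hcs := BddOpAux.cauchy_schwarz (f := fun j => ξ (j + 1))
        (g := fun j => (|((j : ℝ) + 1) - (l₀ : ℝ)| + 1)⁻¹)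
        (fun j => hξ _) (fun j => by positivity) hsum (BddOpAux.D_bound l₀).1
    have hge : ∀ j : ℕ, h (e j) = ξ (j + 1) * (|((j : ℝ) + 1) - (l₀ : ℝ)| + 1)⁻¹ := by
      intro j
      show ξ (j + 1) / (|((j + 1 : ℕ) : ℝ) - (l₀ : ℝ)| + 1) = _
      rw [div_eq_mul_inv]
      push_cast
      ring_nf
    have hhs : Summable h := e.summable_iff.mp ((summable_congr hge).mpr hcs.1)
    have hht : ∑' x, h x ≤ (Real.pi / Real.sqrt 3) * Real.sqrt (∑' l : ℕ, (ξ (l+1))^2) := by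
      rw [← e.tsum_eq h, tsum_congr hge]
      refine hcs.2.trans ?_
      have hD := Real.sqrt_le_sqrt (BddOpAux.D_bound l₀).2
      rw [hπ3] at hD
      calc Real.sqrt (∑' j : ℕ, ξ (j + 1) ^ 2)
            * Real.sqrt (∑' j : ℕ, ((|((j : ℝ) + 1) - (l₀ : ℝ)| + 1)⁻¹) ^ 2)
          ≤ Real.sqrt (∑' j : ℕ, ξ (j + 1) ^ 2) * (Real.pi / Real.sqrt 3) :=
            mul_le_mul_of_nonneg_left hD (Real.sqrt_nonneg _)
        _ = (Real.pi / Real.sqrt 3) * Real.sqrt (∑' l : ℕ, (ξ (l+1))^2) := mul_comm _ _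
    have hhnn : ∀ x, 0 ≤ h x := fun x => div_nonneg (hξ _) (by positivity)
    -- pass to the product type
    set K := ({k : ℕ // 1 ≤ k ∧ k ≤ n - 1} × Bool) with hK
    have hcard : (Fintype.card K : ℝ) = 2 * ((n : ℝ) - 1) := by
      have h1 : Fintype.card {k : ℕ // 1 ≤ k ∧ k ≤ n - 1} = n - 1 := by
        rw [Fintype.card_of_subtype (Finset.Icc 1 (n - 1)) (by intro x; simp [Finset.mem_Icc])]
        simp [Nat.card_Icc]
      have : Fintype.card K = (n - 1) * 2 := by
        show Fintype.card ({k : ℕ // 1 ≤ k ∧ k ≤ n - 1} × Bool) = (n - 1) * 2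
        rw [Fintype.card_prod, h1, Fintype.card_bool]
      rw [this, Nat.cast_mul, Nat.cast_sub (by omega : 1 ≤ n)]
      push_cast; ring
    have hsump : Summable (fun p : {l : ℕ // 1 ≤ l} × K => h p.1) := by
      refine (summable_prod_of_nonneg (fun p => hhnn p.1)).mpr ⟨fun x => ?_, ?_⟩
      · exact Summable.of_finite
      · have : ∀ x : {l : ℕ // 1 ≤ l}, (∑' _ : K, h x) = (Fintype.card K : ℝ) * h x := by
          intro x
          rw [tsum_fintype]
          simp [Finset.sum_const, nsmul_eq_mul]
        exact (summable_congr this).mpr (hhs.mul_left _)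
    have hsumV : Summable (fun v : VIdx n => h v.1) := hsump
    have htsum : (∑' v : VIdx n, h v.1) ≤ C := by
      have h1 : (∑' p : {l : ℕ // 1 ≤ l} × K, h p.1)
          = (Fintype.card K : ℝ) * ∑' x, h x := by
        rw [Summable.tsum_prod' hsump (fun b => Summable.of_finite)]
        have : ∀ x : {l : ℕ // 1 ≤ l}, (∑' _ : K, h x) = (Fintype.card K : ℝ) * h x := by
          intro x
          rw [tsum_fintype]
          simp [Finset.sum_const, nsmul_eq_mul]
        rw [tsum_congr this, tsum_mul_left]
      have h2 : (∑' v : VIdx n, h v.1) = (∑' p : {l : ℕ // 1 ≤ l} × K, h p.1) := rfl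
      rw [h2, h1, hcard]
      calc 2 * ((n : ℝ) - 1) * ∑' x, h x
          ≤ 2 * ((n : ℝ) - 1)
              * ((Real.pi / Real.sqrt 3) * Real.sqrt (∑' l : ℕ, (ξ (l+1))^2)) := by
            refine mul_le_mul_of_nonneg_left hht (by linarith)
        _ = C := by rw [hCdef]; ring
    exact ⟨hsumV, htsum⟩
  -- absolute convergence
  have habs : ∀ a : mSpace n, ∀ v₀ : VIdx n, Summable (fun v => ‖R v₀ v * a v‖) := by
    intro a v₀
    refine Summable.of_nonneg_of_le (fun v => norm_nonneg _) (fun v => ?_)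
      (((key v₀).1).mul_right ‖a‖)
    rw [norm_mul]
    have h1 := hR v₀ v
    have h2 : ‖a v‖ ≤ ‖a‖ := lp.norm_apply_le_norm ENNReal.top_ne_zero a v
    exact mul_le_mul h1 h2 (norm_nonneg _) ((norm_nonneg _).trans h1)
  -- pointwise bound for the operator
  have hptw : ∀ a : mSpace n, ∀ v₀ : VIdx n,
      ‖∑' v : VIdx n, R v₀ v * a v‖ ≤ C * ‖a‖ := by
    intro a v₀
    calc ‖∑' v : VIdx n, R v₀ v * a v‖
        ≤ ∑' v : VIdx n, ‖R v₀ v * a v‖ := norm_tsum_le_tsum_norm (habs a v₀)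
      _ ≤ ∑' v : VIdx n, ξ v.1.1 / (|(v.1.1 : ℝ) - (v₀.1.1 : ℝ)| + 1) * ‖a‖ := by
          refine Summable.tsum_le_tsum (fun v => ?_) (habs a v₀) (((key v₀).1).mul_right ‖a‖)
          rw [norm_mul]
          exact mul_le_mul (hR v₀ v) (lp.norm_apply_le_norm ENNReal.top_ne_zero a v)
            (norm_nonneg _) ((norm_nonneg _).trans (hR v₀ v))
      _ = (∑' v : VIdx n, ξ v.1.1 / (|(v.1.1 : ℝ) - (v₀.1.1 : ℝ)| + 1)) * ‖a‖ :=
          tsum_mul_right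
      _ ≤ C * ‖a‖ := mul_le_mul_of_nonneg_right (key v₀).2 (norm_nonneg a)
  have hmem : ∀ a : mSpace n, Memℓp (fun v₀ : VIdx n => ∑' v : VIdx n, R v₀ v * a v) ∞ := by
    intro a
    apply memℓp_infty
    refine ⟨C * ‖a‖, ?_⟩
    rintro x ⟨v₀, rfl⟩
    exact hptw a v₀
  let Tlin : mSpace n →ₗ[ℂ] mSpace n :=
    { toFun := fun a =>
        (⟨fun v₀ : VIdx n => ∑' v : VIdx n, R v₀ v * a v, hmem a⟩ :
          lp (fun _ : VIdx n => ℂ) ∞)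
      map_add' := fun a b => by
        apply lp.ext
        funext v₀
        show (∑' v : VIdx n, R v₀ v * (a + b) v) = _
        have hab : ∀ v : VIdx n, R v₀ v * (a + b) v = R v₀ v * a v + R v₀ v * b v := by
          intro v
          show R v₀ v * (a v + b v) = _
          simp [mul_add]
        rw [tsum_congr hab, Summable.tsum_add ((habs a v₀).of_norm) ((habs b v₀).of_norm)]
        rfl
      map_smul' := fun c a => by
        apply lp.ext
        funext v₀
        show (∑' v : VIdx n, R v₀ v * (c • a) v) = _
        have hca : ∀ v : VIdx n, R v₀ v * (c • a) v = c * (R v₀ v * a v) := by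
          intro v
          show R v₀ v * (c • a v) = _
          simp [smul_eq_mul]; ring
        rw [tsum_congr hca, tsum_mul_left]
        rfl }
  have hbound : ∀ a : mSpace n, ‖Tlin a‖ ≤ C * ‖a‖ := by
    intro a
    exact lp.norm_le_of_forall_le (mul_nonneg hC0 (norm_nonneg a)) (fun v₀ => hptw a v₀)
  let T : mSpace n →L[ℂ] mSpace n := Tlin.mkContinuous C hbound
  refine ⟨habs, T, fun a v₀ => rfl, ?_, ?_⟩
  · exact LinearMap.mkContinuous_norm_le Tlin hC0 hbound
  · intro hlt
    have hT : ‖T‖ < 1 := lt_of_le_of_lt (LinearMap.mkContinuous_norm_le Tlin hC0 hbound) hlt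
    refine ⟨↑(Units.oneSub T hT)⁻¹, ?_, ?_⟩
    · show (↑(Units.oneSub T hT)⁻¹ : mSpace n →L[ℂ] mSpace n)
          * (ContinuousLinearMap.id ℂ (mSpace n) - T) = ContinuousLinearMap.id ℂ (mSpace n)
      rw [← ContinuousLinearMap.one_def]
      exact (Units.oneSub T hT).inv_mul
    · show (ContinuousLinearMap.id ℂ (mSpace n) - T)
          * (↑(Units.oneSub T hT)⁻¹ : mSpace n →L[ℂ] mSpace n) = ContinuousLinearMap.id ℂ (mSpace n)
      rw [← ContinuousLinearMap.one_def]
      exact (Units.oneSub T hT).mul_inv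
end
end
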